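/- arXiv:2605.08593 — 9 statements merged into one kernel-verified Lean document; each statement's English description precedes it below -/
import Mathlib

section
/- Let N ≥ 1 be an integer, let f : ℝ^d → ℝ ∪ {∞} be closed, convex, and proper, and let g : ℝ^d → ℝ ∪ {∞} be closed, proper, and μ-strongly convex with μ > 0. Assume a primal solution x⋆ ∈ argmin(f+g) and a dual solution u⋆ with u⋆ ∈ ∂g(x⋆) and −u⋆ ∈ ∂f(x⋆) exist. Then the iterates of the Fast Douglas–Rachford (FDR) method started from (x₀, u₀) satisfy ‖x_N − x⋆‖² ≤ (‖x₀ − x⋆‖² + ‖u₀ − u⋆‖²) / (1 + 4N²μ²). -/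
noncomputable section

open scoped RealInnerProductSpace
open Finset

variable {E : Type*} [NormedAddCommGroup E] [InnerProductSpace ℝ E]

/-- An extended-real-valued function is proper: never `⊥` and finite somewhere. -/
def ProperFn (f : E → EReal) : Prop :=
  (∀ x, f x ≠ ⊥) ∧ ∃ x, f x ≠ ⊤

/-- An extended-real-valued function is closed: its epigraph is closed. -/
def ClosedFn (f : E → EReal) : Prop :=
  IsClosed {p : E × ℝ | f p.1 ≤ (p.2 : EReal)}

/-- Convexity for extended-real-valued functions. -/
def ConvexFn (f : E → EReal) : Prop :=
  ∀ x y : E, ∀ a b : ℝ, 0 ≤ a → 0 ≤ b → a + b = 1 →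
    f (a • x + b • y) ≤ (a : EReal) * f x + (b : EReal) * f y

/-- `g` is `μ`-strongly convex iff `g - (μ/2)‖·‖²` is convex. -/
def StrongConvexFn (μ : ℝ) (g : E → EReal) : Prop :=
  ConvexFn (fun x => g x - (((μ / 2) * ‖x‖ ^ 2 : ℝ) : EReal))

/-- `v` is a subgradient of `f` at `x`. -/
def SubdiffAt (f : E → EReal) (x v : E) : Prop :=
  ∀ y, f x + ((⟪v, y - x⟫ : ℝ) : EReal) ≤ f y

/-- `p` is a proximal point of `f` with stepsize `γ` at `x`, i.e. `p` minimizes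
`z ↦ f z + (1/(2γ))‖z - x‖²`. For closed proper convex `f` and `γ > 0` this
point is unique, i.e. `p = prox_{γ f}(x)`. -/
def IsProx (γ : ℝ) (f : E → EReal) (x p : E) : Prop :=
  ∀ z, f p + ((1 / (2 * γ) * ‖p - x‖ ^ 2 : ℝ) : EReal)
      ≤ f z + ((1 / (2 * γ) * ‖z - x‖ ^ 2 : ℝ) : EReal)

lemma esub_add (X : EReal) (hX : X ≠ ⊥) (r : ℝ) : X - (r:EReal) + (r:EReal) = X := by
  induction X using EReal.rec with
  | bot => simp at hX
  | coe a => norm_cast; ring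
  | top => rw [EReal.top_sub_coe, EReal.top_add_coe]

lemma eadd_add (X : EReal) (r s : ℝ) : X + (r:EReal) + (s:EReal) = X + ((r+s:ℝ):EReal) := by
  induction X using EReal.rec with
  | bot => simp
  | coe a => norm_cast; ring
  | top => rw [EReal.top_add_coe, EReal.top_add_coe, EReal.top_add_coe]

lemma erearrange (X : EReal) (hX : X ≠ ⊥) (a b c d : ℝ) (h : a - b = d - c) :
    X + (a:EReal) - (b:EReal) = X - (c:EReal) + (d:EReal) := by
  induction X using EReal.rec with
  | bot => simp at hX
  | coe e => norm_cast; linarith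
  | top => rw [EReal.top_add_coe, EReal.top_sub_coe, EReal.top_sub_coe, EReal.top_add_coe]

lemma ecancel (P Q : EReal) (q : ℝ) (h : P + (q:EReal) ≤ Q + (q:EReal)) : P ≤ Q :=
  (EReal.addLECancellable_coe q).add_le_add_iff_right.mp (by simpa [add_comm] using h)

lemma etop_ne (X : EReal) (r : ℝ) (h : X ≠ ⊤) : X + (r:EReal) ≠ ⊤ :=
  (EReal.add_lt_top h (EReal.coe_ne_top r)).ne

lemma ene_top_of_le (X Y : EReal) (r : ℝ) (h : X + (r:EReal) ≤ Y) (hY : Y ≠ ⊤) : X ≠ ⊤ := by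
  intro hx; rw [hx, EReal.top_add_coe] at h; exact hY (top_le_iff.mp h)

lemma edistrib (a : ℝ) (ha : 0 ≤ a) (X : EReal) (hX : X ≠ ⊥) (r : ℝ) :
    (a:EReal) * (X + (r:EReal)) = (a:EReal) * X + ((a*r : ℝ):EReal) := by
  induction X using EReal.rec with
  | bot => simp at hX
  | coe c => norm_cast; ring
  | top =>
    rcases eq_or_lt_of_le ha with h0 | h0
    · rw [← h0]; norm_cast; simp
    · rw [EReal.top_add_coe, EReal.coe_mul_top_of_pos h0, EReal.top_add_coe]

lemma convexfn_add_real {F : E → EReal} (hF : ConvexFn F) (hbot : ∀ z, F z ≠ ⊥) (ℓ : E → ℝ)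
    (haff : ∀ (x y : E) (a b : ℝ), 0 ≤ a → 0 ≤ b → a + b = 1 →
      ℓ (a • x + b • y) = a * ℓ x + b * ℓ y) :
    ConvexFn (fun z => F z + ((ℓ z : ℝ) : EReal)) := by
  intro x y a b ha hb hab
  simp only
  calc F (a•x+b•y) + ((ℓ (a•x+b•y) : ℝ) : EReal)
      ≤ ((a:EReal) * F x + (b:EReal) * F y) + ((a * ℓ x + b * ℓ y : ℝ):EReal) := by
        rw [haff x y a b ha hb hab]; exact add_le_add_left (hF x y a b ha hb hab) _
    _ = ((a:EReal) * F x + ((a * ℓ x:ℝ):EReal)) + ((b:EReal) * F y + ((b * ℓ y:ℝ):EReal)) := by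
        rw [EReal.coe_add, add_add_add_comm]
    _ = (a:EReal) * (F x + ((ℓ x:ℝ):EReal)) + (b:EReal) * (F y + ((ℓ y:ℝ):EReal)) := by
        rw [edistrib a ha (F x) (hbot x), edistrib b hb (F y) (hbot y)]

lemma normid (x z : E) (t : ℝ) :
    ‖(1-t) • x + t • z‖^2 = (1-t)*‖x‖^2 + t*‖z‖^2 - t*(1-t)*‖x-z‖^2 := by
  have e1 : ⟪(1-t)•x + t•z, (1-t)•x + t•z⟫ = ‖(1-t)•x + t•z‖^2 := real_inner_self_eq_norm_sq _
  have e2 : ⟪x,x⟫ = ‖x‖^2 := real_inner_self_eq_norm_sq _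
  have e3 : ⟪z,z⟫ = ‖z‖^2 := real_inner_self_eq_norm_sq _
  have e4 : ‖x-z‖^2 = ‖x‖^2 - 2*⟪x,z⟫ + ‖z‖^2 := norm_sub_sq_real x z
  have e5 : ⟪z,x⟫ = ⟪x,z⟫ := real_inner_comm x z
  simp only [inner_add_left, inner_add_right, real_inner_smul_left, real_inner_smul_right] at e1
  rw [← e1, e4, ← e2, ← e3, e5]; ring

lemma subdiff_strong {h : E → EReal} {m : ℝ} (hm : 0 ≤ m)
    (hcv : ConvexFn (fun v => h v - (((m/2) * ‖v‖^2 : ℝ) : EReal)))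
    (hbot : ∀ z, h z ≠ ⊥) {x u : E} (hsub : SubdiffAt h x u) (hxtop : h x ≠ ⊤) :
    ∀ z, h x + ((⟪u, z - x⟫ + m/2 * ‖z - x‖^2 : ℝ) : EReal) ≤ h z := by
  intro z
  by_cases hz : h z = ⊤
  · rw [hz]; exact le_top
  obtain ⟨A, hA⟩ : ∃ a:ℝ, h x = (a:EReal) := ⟨(h x).toReal, (EReal.coe_toReal hxtop (hbot x)).symm⟩
  obtain ⟨C, hC⟩ : ∃ a:ℝ, h z = (a:EReal) := ⟨(h z).toReal, (EReal.coe_toReal hz (hbot z)).symm⟩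
  set I := ⟪u, z - x⟫ with hI
  set W := ‖x - z‖^2 with hWdef
  have hW : 0 ≤ W := by positivity
  have hWz : ‖z - x‖^2 = W := by rw [hWdef, norm_sub_rev]
  have key : ∀ t : ℝ, 0 < t → t ≤ 1 → I + m/2*(1-t)*W ≤ C - A := by
    intro t ht0 ht1
    set zt := (1-t) • x + t • z with hzt
    have hcv' := hcv x z (1-t) t (by linarith) (le_of_lt ht0) (by ring)
    simp only at hcv'
    rw [hA, hC, ← EReal.coe_sub, ← EReal.coe_sub, ← EReal.coe_mul, ← EReal.coe_mul,
      ← EReal.coe_add] at hcv'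
    -- hcv' : h zt - coe(m/2‖zt‖²) ≤ coe(...)
    have hcv'' : h zt ≤ (((1-t)*(A - m/2*‖x‖^2) + t*(C - m/2*‖z‖^2) + m/2*‖zt‖^2 : ℝ) : EReal) := by
      have := add_le_add_left hcv' ((m/2*‖zt‖^2 : ℝ) : EReal)
      rwa [esub_add _ (hbot zt), ← EReal.coe_add] at this
    have hsub' := hsub zt
    have hztx : zt - x = t • (z - x) := by rw [hzt]; module
    rw [hA, hztx, real_inner_smul_right, ← EReal.coe_add] at hsub'
    have hreal : A + t * I ≤ (1-t)*(A - m/2*‖x‖^2) + t*(C - m/2*‖z‖^2) + m/2*‖zt‖^2 :=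
      EReal.coe_le_coe_iff.mp (le_trans hsub' hcv'')
    rw [hzt] at hreal
    rw [normid x z t, ← hWdef] at hreal
    have hh : (0:ℝ) < t := ht0
    have h3 : t*(I + m/2*(1-t)*W) ≤ t*(C - A) := by nlinarith [hreal]
    exact (mul_le_mul_iff_right₀ hh).mp h3
  rcases eq_or_lt_of_le (show (0:ℝ) ≤ m/2*W from by positivity) with h0 | h0
  · have k1 := key 1 one_pos le_rfl
    rw [hA, hC, ← EReal.coe_add, EReal.coe_le_coe_iff, hWz]
    nlinarith [k1]
  · rw [hA, hC, ← EReal.coe_add, EReal.coe_le_coe_iff, hWz]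
    have : I + m/2*W ≤ C - A := by
      refine le_of_forall_pos_le_add fun ε hε => ?_
      set c := m/2*W with hc
      have hc0 : c ≠ 0 := ne_of_gt h0
      have ht0 : 0 < min 1 (ε/c) := lt_min one_pos (div_pos hε h0)
      have hk := key _ ht0 (min_le_left _ _)
      have h2 : min 1 (ε/c) * c ≤ ε := by
        calc min 1 (ε/c) * c ≤ (ε/c) * c := by
              apply mul_le_mul_of_nonneg_right (min_le_right _ _) (le_of_lt h0)
          _ = ε := div_mul_cancel₀ ε hc0
      nlinarith [hk, h2]
    linarith [this]

lemma esub_ne_bot (X : EReal) (hX : X ≠ ⊥) (r : ℝ) : X - (r:EReal) ≠ ⊥ := by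
  induction X using EReal.rec with
  | bot => simp at hX
  | coe a => rw [← EReal.coe_sub]; exact EReal.coe_ne_bot _
  | top => rw [EReal.top_sub_coe]; exact bot_lt_top.ne'

lemma prox_strong {h : E → EReal} {m γ : ℝ} (hm : 0 ≤ m) (hγ : 0 < γ)
    (hcv : ConvexFn (fun v => h v - (((m/2) * ‖v‖^2 : ℝ):EReal)))
    (hbot : ∀ z, h z ≠ ⊥) (hfin : ∃ z, h z ≠ ⊤)
    {x p : E} (hprox : IsProx γ h x p) :
    ∀ z, h p + ((⟪γ⁻¹ • (x - p), z - p⟫ + m/2 * ‖z - p‖^2 : ℝ):EReal) ≤ h z := by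
  have hγ' : γ ≠ 0 := ne_of_gt hγ
  set κ : ℝ := 1/(2*γ) with hκ
  set H : E → EReal := fun v => h v + ((κ * ‖v - x‖^2 : ℝ):EReal) with hH
  have Hbot : ∀ z, H z ≠ ⊥ := fun z h' =>
    (hbot z) ((EReal.add_eq_bot_iff.mp h').resolve_right (EReal.coe_ne_bot _))
  have Hsub : SubdiffAt H p 0 := by
    intro z
    simpa only [inner_zero_left, EReal.coe_zero, add_zero] using hprox z
  have hptop : h p ≠ ⊤ := by
    obtain ⟨z0, hz0⟩ := hfin
    exact ene_top_of_le _ _ _ (hprox z0) (etop_ne _ _ hz0)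
  have Hptop : H p ≠ ⊤ := etop_ne _ _ hptop
  have Hcv : ConvexFn (fun v => H v - ((((m + 1/γ)/2) * ‖v‖^2 : ℝ):EReal)) := by
    have heq : (fun v => H v - ((((m + 1/γ)/2) * ‖v‖^2 : ℝ):EReal))
        = fun v => (h v - (((m/2) * ‖v‖^2 : ℝ):EReal)) + ((κ * (‖x‖^2 - 2*⟪v,x⟫) : ℝ):EReal) := by
      funext v
      refine erearrange (h v) (hbot v) _ _ _ _ ?_
      have hnorm : ‖v - x‖^2 = ‖v‖^2 - 2*⟪v,x⟫ + ‖x‖^2 := norm_sub_sq_real v x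
      rw [hκ, hnorm]; field_simp; ring
    rw [heq]
    refine convexfn_add_real hcv (fun z => esub_ne_bot _ (hbot z) _) _ ?_
    intro a b s t hs ht hst
    simp only [inner_add_left, real_inner_smul_left]
    rw [show s = 1 - t from by linarith]; ring
  have main := subdiff_strong (m := m + 1/γ) (by positivity) Hcv Hbot Hsub Hptop
  intro z
  have hz := main z
  simp only [hH, inner_zero_left, zero_add] at hz
  rw [eadd_add] at hz
  have hid : κ * ‖p - x‖^2 + (m + 1/γ)/2 * ‖z - p‖^2
      = (⟪γ⁻¹ • (x - p), z - p⟫ + m/2 * ‖z - p‖^2) + κ * ‖z - x‖^2 := by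
    have h1 : ‖z - x‖^2 = ‖z - p‖^2 + 2*⟪z - p, p - x⟫ + ‖p - x‖^2 := by
      have : z - x = (z - p) + (p - x) := by abel
      rw [this, norm_add_sq_real]
    have h2 : ⟪γ⁻¹ • (x - p), z - p⟫ = γ⁻¹ * ⟪x - p, z - p⟫ := real_inner_smul_left _ _ _
    have h3 : ⟪x - p, z - p⟫ = -⟪z - p, p - x⟫ := by
      rw [show x - p = -(p - x) by abel, inner_neg_left, real_inner_comm]
    rw [h1, h2, h3, hκ]; field_simp; ring
  rw [hid, ← eadd_add] at hz
  exact ecancel _ _ _ hz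

lemma expand_sq (v w : E) (t : ℝ) : ‖v + t • w‖^2 = ‖v‖^2 + 2*t*⟪w,v⟫ + t^2*‖w‖^2 := by
  have e1 : ⟪v + t•w, v + t•w⟫ = ‖v + t•w‖^2 := real_inner_self_eq_norm_sq _
  have e2 : ⟪v,v⟫ = ‖v‖^2 := real_inner_self_eq_norm_sq _
  have e3 : ⟪w,w⟫ = ‖w‖^2 := real_inner_self_eq_norm_sq _
  have e5 : ⟪v,w⟫ = ⟪w,v⟫ := real_inner_comm w v
  simp only [inner_add_left, inner_add_right, real_inner_smul_left, real_inner_smul_right] at e1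
  rw [← e1, ← e2, ← e3, e5]; ring

lemma expand_sq' (v w : E) (t : ℝ) : ‖v - t • w‖^2 = ‖v‖^2 - 2*t*⟪w,v⟫ + t^2*‖w‖^2 := by
  have := expand_sq v w (-t)
  rw [neg_smul] at this
  rw [sub_eq_add_neg, this]; ring

lemma step_ineq (p q a b : E) (η η' μ : ℝ) (hη : 0 < η) (hη' : 0 < η')
    (hrel : η' - η + 2*μ*η*η' = 0)
    (hpq : μ * ‖p‖^2 ≤ ⟪q, p⟫) (hab : 0 ≤ ⟪b, a⟫)
    (hsum : a + η' • b = p - η' • q) :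
    ‖a‖^2 ≤ (η'/η)^2 * ‖p + η • q‖^2 ∧ ‖a - η' • b‖^2 ≤ (η'/η)^2 * ‖p + η • q‖^2 := by
  have mid : ‖p - η' • q‖^2 ≤ (η'/η)^2 * ‖p + η • q‖^2 := by
    rw [expand_sq, expand_sq', div_pow, div_mul_eq_mul_div, le_div_iff₀ (by positivity : (0:ℝ) < η^2)]
    have h1 : 0 ≤ ⟪q,p⟫ - μ*‖p‖^2 := by linarith
    have h2 : (0:ℝ) ≤ 2*η*η'*(η+η') := by positivity
    nlinarith [mul_nonneg h2 h1, mul_nonneg (mul_nonneg hη.le hη'.le) (sq_nonneg ‖p‖),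
      sq_nonneg ‖q‖, hrel, mul_self_nonneg ((η+η')*‖p‖)]
  have hsum2 : ‖a + η' • b‖^2 = ‖p - η' • q‖^2 := by rw [hsum]
  rw [expand_sq] at hsum2
  constructor
  · nlinarith [sq_nonneg (η'*‖b‖), mul_nonneg hη'.le hab]
  · rw [expand_sq']
    nlinarith [mul_nonneg hη'.le hab]


lemma two_ineq (X Y : EReal) (r1 r2 : ℝ) (hXb : X ≠ ⊥) (hXt : X ≠ ⊤) (hYb : Y ≠ ⊥) (hYt : Y ≠ ⊤)
    (h1 : X + (r1:EReal) ≤ Y) (h2 : Y + (r2:EReal) ≤ X) : r1 + r2 ≤ 0 := by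
  obtain ⟨A, hA⟩ : ∃ a:ℝ, X = (a:EReal) := ⟨X.toReal, (EReal.coe_toReal hXt hXb).symm⟩
  obtain ⟨B, hB⟩ : ∃ a:ℝ, Y = (a:EReal) := ⟨Y.toReal, (EReal.coe_toReal hYt hYb).symm⟩
  rw [hA, hB, ← EReal.coe_add, EReal.coe_le_coe_iff] at h1 h2
  linarith

lemma init_bound (aa bb : E) (t : ℝ) (ht : 0 ≤ t) :
    ‖aa + t • bb‖^2 ≤ (1 + t^2) * (‖aa‖^2 + ‖bb‖^2) := by
  rw [expand_sq]
  nlinarith [real_inner_le_norm bb aa, sq_nonneg (t*‖aa‖ - ‖bb‖),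
    mul_nonneg (norm_nonneg aa) (norm_nonneg bb), sq_nonneg (‖aa‖ - t*‖bb‖),
    mul_nonneg ht (mul_nonneg (norm_nonneg bb) (norm_nonneg aa))]

/-- Theorem: convergence rate of Fast Douglas–Rachford splitting.
`η k = 2Nμ/(1 + 4kNμ²)`, `w₀ = x₀ - η₀ • u₀`, and for `k = 0, …, N-1`:
`y (k+1) = prox_{η k · g} (2 x k - w k)`,
`w (k+1) = (1 + η(k+1)/η k) • y (k+1) - (η(k+1)/η k) • (2 x k - w k)`,
`x (k+1) = prox_{η (k+1) · f} (w (k+1))`.  Then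
`‖x N - x⋆‖² ≤ (‖x₀ - x⋆‖² + ‖u₀ - u⋆‖²) / (1 + 4N²μ²)`. -/
theorem fdr_rate {d : ℕ} (N : ℕ) (hN : 1 ≤ N) (μ : ℝ) (hμ : 0 < μ)
    (f g : EuclideanSpace ℝ (Fin d) → EReal)
    (hfcl : ClosedFn f) (hfcv : ConvexFn f) (hfpr : ProperFn f)
    (hgcl : ClosedFn g) (hgpr : ProperFn g) (hgsc : StrongConvexFn μ g)
    (xs us : EuclideanSpace ℝ (Fin d))
    (hmin : ∀ z, f xs + g xs ≤ f z + g z)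
    (hgsub : SubdiffAt g xs us)
    (hfsub : SubdiffAt f xs (-us))
    (x0 u0 : EuclideanSpace ℝ (Fin d))
    (η : ℕ → ℝ)
    (hη : ∀ k, η k = 2 * (N : ℝ) * μ / (1 + 4 * (k : ℝ) * (N : ℝ) * μ ^ 2))
    (x w y : ℕ → EuclideanSpace ℝ (Fin d))
    (hx0 : x 0 = x0)
    (hw0 : w 0 = x0 - η 0 • u0)
    (hy : ∀ k < N, IsProx (η k) g ((2 : ℝ) • x k - w k) (y (k + 1)))
    (hw : ∀ k < N,
      w (k + 1) = (1 + η (k + 1) / η k) • y (k + 1)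
        - (η (k + 1) / η k) • ((2 : ℝ) • x k - w k))
    (hx : ∀ k < N, IsProx (η (k + 1)) f (w (k + 1)) (x (k + 1))) :
    ‖x N - xs‖ ^ 2
      ≤ (‖x0 - xs‖ ^ 2 + ‖u0 - us‖ ^ 2) / (1 + 4 * (N : ℝ) ^ 2 * μ ^ 2) := by
  have hN1 : (1:ℝ) ≤ (N:ℝ) := by exact_mod_cast hN
  have hk0 : ∀ k : ℕ, (0:ℝ) ≤ (k:ℝ) := fun k => Nat.cast_nonneg k
  have hηpos : ∀ k : ℕ, 0 < η k := by
    intro k; rw [hη k]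
    apply div_pos
    · nlinarith [mul_le_mul_of_nonneg_right hN1 hμ.le]
    · positivity
  have hηne : ∀ k : ℕ, η k ≠ 0 := fun k => (hηpos k).ne'
  have hrel : ∀ k : ℕ, η (k+1) - η k + 2*μ*(η k)*(η (k+1)) = 0 := by
    intro k
    have d1 : (0:ℝ) < 1 + 4*(k:ℝ)*(N:ℝ)*μ^2 := by positivity
    have d2 : (0:ℝ) < 1 + 4*((k:ℝ)+1)*(N:ℝ)*μ^2 := by positivity
    rw [hη (k+1), hη k]
    push_cast
    field_simp
    ring
  have hfxs_top : f xs ≠ ⊤ := by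
    obtain ⟨z0, hz0⟩ := hfpr.2
    exact ene_top_of_le _ _ _ (hfsub z0) hz0
  have hgxs_top : g xs ≠ ⊤ := by
    obtain ⟨z0, hz0⟩ := hgpr.2
    exact ene_top_of_le _ _ _ (hgsub z0) hz0
  have hGs := subdiff_strong (m := μ) hμ.le hgsc hgpr.1 hgsub hgxs_top
  have hfcv0 : ConvexFn (fun v => f v - (((0:ℝ)/2 * ‖v‖^2 : ℝ) : EReal)) := by
    have heq : (fun v => f v - (((0:ℝ)/2 * ‖v‖^2 : ℝ) : EReal)) = f := by
      funext v; norm_num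
    rw [heq]; exact hfcv
  set E' : ℕ → EuclideanSpace ℝ (Fin d) :=
    fun k => (2:ℝ) • x k - w k - xs - η k • us with hE'
  have step_all : ∀ k, k < N →
      ‖x (k+1) - xs‖^2 ≤ (η (k+1)/η k)^2 * ‖E' k‖^2 ∧
      ‖E' (k+1)‖^2 ≤ (η (k+1)/η k)^2 * ‖E' k‖^2 := by
    intro k hk
    set v : EuclideanSpace ℝ (Fin d) := (2:ℝ) • x k - w k with hv
    set u' : EuclideanSpace ℝ (Fin d) := (η k)⁻¹ • (v - y (k+1)) with hu'
    set s' : EuclideanSpace ℝ (Fin d) := (η (k+1))⁻¹ • (w (k+1) - x (k+1)) with hs'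
    have hyk := prox_strong (m := μ) hμ.le (hηpos k) hgsc hgpr.1 hgpr.2 (hy k hk)
    have hxk := prox_strong (m := 0) le_rfl (hηpos (k+1)) hfcv0 hfpr.1 hfpr.2 (hx k hk)
    rw [← hv] at hyk
    have hytop : g (y (k+1)) ≠ ⊤ := ene_top_of_le _ _ _ (hyk xs) hgxs_top
    have hxtop : f (x (k+1)) ≠ ⊤ := ene_top_of_le _ _ _ (hxk xs) hfxs_top
    have hM2 : μ * ‖y (k+1) - xs‖^2 ≤ ⟪u' - us, y (k+1) - xs⟫ := by
      have hsum0 := two_ineq _ _ _ _ (hgpr.1 _) hytop (hgpr.1 _) hgxs_top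
        (hyk xs) (hGs (y (k+1)))
      have e1 : ⟪u', xs - y (k+1)⟫ = -⟪u', y (k+1) - xs⟫ := by
        rw [show xs - y (k+1) = -(y (k+1) - xs) by abel, inner_neg_right]
      have e2 : ‖xs - y (k+1)‖ = ‖y (k+1) - xs‖ := norm_sub_rev _ _
      rw [e1, e2] at hsum0
      rw [inner_sub_left]
      linarith
    have hM1 : 0 ≤ ⟪s' + us, x (k+1) - xs⟫ := by
      have hsum0 := two_ineq _ _ _ _ (hfpr.1 _) hxtop (hfpr.1 _) hfxs_top
        (hxk xs) (hfsub (x (k+1)))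
      have e1 : ⟪s', xs - x (k+1)⟫ = -⟪s', x (k+1) - xs⟫ := by
        rw [show xs - x (k+1) = -(x (k+1) - xs) by abel, inner_neg_right]
      rw [e1, inner_neg_left] at hsum0
      rw [inner_add_left]
      linarith
    have hv1 : v = y (k+1) + η k • u' := by
      rw [hu', smul_inv_smul₀ (hηne k)]; abel
    have hv2 : w (k+1) = y (k+1) - η (k+1) • u' := by
      rw [hw k hk, ← hv, hv1]
      match_scalars <;> (field_simp [hηne k]; try ring)
    have hv3' : w (k+1) = x (k+1) + η (k+1) • s' := by
      rw [hs', smul_inv_smul₀ (hηne (k+1))]; abel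
    have hEk : E' k = (y (k+1) - xs) + η k • (u' - us) := by
      simp only [hE']
      rw [← hv, hv1]; module
    have hsum : (x (k+1) - xs) + η (k+1) • (s' + us)
        = (y (k+1) - xs) - η (k+1) • (u' - us) := by
      have hx3 : x (k+1) = y (k+1) - η (k+1) • u' - η (k+1) • s' := by
        rw [← hv2, hv3']; abel
      rw [hx3]; module
    have hEk1 : E' (k+1) = (x (k+1) - xs) - η (k+1) • (s' + us) := by
      simp only [hE']
      rw [hv3']; module
    have hmain := step_ineq (y (k+1) - xs) (u' - us) (x (k+1) - xs) (s' + us)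
      (η k) (η (k+1)) μ (hηpos k) (hηpos (k+1)) (hrel k) hM2 hM1 hsum
    exact ⟨by rw [hEk]; exact hmain.1, by rw [hEk, hEk1]; exact hmain.2⟩
  have ind : ∀ k, k ≤ N → ‖E' k‖^2 ≤ (η k / η 0)^2 * ‖E' 0‖^2 := by
    intro k
    induction k with
    | zero => intro _; rw [div_self (hηne 0)]; norm_num
    | succ n ih =>
      intro hk
      have hn : n < N := hk
      have h1 := (step_all n hn).2
      have h2 := ih (Nat.le_of_lt hn)
      have hc : (η (n+1)/η n) * (η n / η 0) = η (n+1)/η 0 := by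
        rw [div_mul_div_comm, mul_comm (η (n+1)) (η n), mul_div_mul_left _ _ (hηne n)]
      calc ‖E' (n+1)‖^2 ≤ (η (n+1)/η n)^2 * ‖E' n‖^2 := h1
        _ ≤ (η (n+1)/η n)^2 * ((η n / η 0)^2 * ‖E' 0‖^2) :=
            mul_le_mul_of_nonneg_left h2 (sq_nonneg _)
        _ = (η (n+1) / η 0)^2 * ‖E' 0‖^2 := by rw [← mul_assoc, ← mul_pow, hc]
  obtain ⟨n, hn⟩ : ∃ n, N = n + 1 := ⟨N - 1, (Nat.succ_pred_eq_of_pos hN).symm⟩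
  have hnN : n < N := by omega
  have hc : (η (n+1)/η n) * (η n / η 0) = η (n+1)/η 0 := by
    rw [div_mul_div_comm, mul_comm (η (n+1)) (η n), mul_div_mul_left _ _ (hηne n)]
  have hfinN : ‖x N - xs‖^2 ≤ (η N / η 0)^2 * ‖E' 0‖^2 := by
    rw [hn]
    calc ‖x (n+1) - xs‖^2 ≤ (η (n+1)/η n)^2 * ‖E' n‖^2 := (step_all n hnN).1
      _ ≤ (η (n+1)/η n)^2 * ((η n / η 0)^2 * ‖E' 0‖^2) :=
          mul_le_mul_of_nonneg_left (ind n (Nat.le_of_lt hnN)) (sq_nonneg _)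
      _ = (η (n+1) / η 0)^2 * ‖E' 0‖^2 := by rw [← mul_assoc, ← mul_pow, hc]
  have hE0v : E' 0 = (x0 - xs) + η 0 • (u0 - us) := by
    simp only [hE']
    rw [hx0, hw0]; module
  have hE0 : ‖E' 0‖^2 ≤ (1 + (η 0)^2) * (‖x0 - xs‖^2 + ‖u0 - us‖^2) := by
    rw [hE0v]; exact init_bound _ _ _ (hηpos 0).le
  have hη0 : η 0 = 2*(N:ℝ)*μ := by rw [hη 0]; norm_num
  set D : ℝ := 1 + 4*(N:ℝ)^2*μ^2 with hD
  have hDpos : 0 < D := by rw [hD]; positivity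
  have hNμne : 2*(N:ℝ)*μ ≠ 0 := by positivity
  have hηN : η N = 2*(N:ℝ)*μ / D := by
    rw [hη N, hD]; ring_nf
  have hratio : (η N / η 0)^2 = 1 / D^2 := by
    rw [hηN, hη0, div_div, mul_comm D (2*(N:ℝ)*μ), ← div_div, div_self hNμne,
      div_pow, one_pow]
  calc ‖x N - xs‖^2 ≤ (η N / η 0)^2 * ‖E' 0‖^2 := hfinN
    _ = 1/D^2 * ‖E' 0‖^2 := by rw [hratio]
    _ ≤ 1/D^2 * ((1 + (η 0)^2) * (‖x0 - xs‖^2 + ‖u0 - us‖^2)) :=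
        mul_le_mul_of_nonneg_left hE0 (by positivity)
    _ = (‖x0 - xs‖^2 + ‖u0 - us‖^2) / D := by
        rw [hη0, hD]
        field_simp
        ring
end
end

section
/- Let N ≥ 2, μ > 0, ν = 1/(1 + 4N²μ²), Ω = 1 + 4Nμ². Let f : ℝ^d → ℝ ∪ {∞} be closed, convex, proper and g : ℝ^d → ℝ ∪ {∞} be closed, proper, μ-strongly convex, with primal-dual solution (x⋆, u⋆) satisfying u⋆ ∈ ∂g(x⋆), −u⋆ ∈ ∂f(x⋆). Let x₀, u₀ ∈ ℝ^d and let y₁, w₁, x₁ be the first FDR iterates, and set g'(y₁) = (x₀ + η₀u₀ − y₁)/η₀ ∈ ∂g(y₁) and f'(x₁) = (w₁ − x₁)/η₁ ∈ ∂f(x₁). Then ν²‖Ω x⋆ + 2Nμ u⋆ − Ω(2x₁ − w₁)‖² ≤ ν²‖x⋆ + 2Nμ u⋆ − x₀ − 2Nμ u₀‖². -/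
noncomputable section

open scoped RealInnerProductSpace
open Finset

variable {E : Type*} [NormedAddCommGroup E] [InnerProductSpace ℝ E]

lemma subdiff_finite {f : E → EReal} (hpr : ProperFn f) {x v : E}
    (h : SubdiffAt f x v) : ∃ r : ℝ, f x = (r : EReal) := by
  refine ⟨(f x).toReal, ((EReal.coe_toReal ?_ (hpr.1 x)).symm)⟩
  obtain ⟨z, hz⟩ := hpr.2
  intro hx
  have := h z
  rw [hx, EReal.top_add_coe] at this
  exact hz (top_le_iff.mp this)

lemma key_strong {μ : ℝ} (hμ : 0 < μ) {g : E → EReal} (hpr : ProperFn g)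
    (hsc : StrongConvexFn μ g) {x v y : E} (h : SubdiffAt g x v)
    {gx gy : ℝ} (hgx : g x = (gx : EReal)) (hgy : g y = (gy : EReal)) :
    gx + ⟪v, y - x⟫ + μ / 2 * ‖y - x‖ ^ 2 ≤ gy := by
  set c : ℝ := ‖y - x‖ ^ 2 with hc
  have hc0 : 0 ≤ c := sq_nonneg _
  have step : ∀ t : ℝ, 0 < t → t < 1 →
      gx + ⟪v, y - x⟫ + μ / 2 * (1 - t) * c ≤ gy := by
    intro t ht0 ht1
    set z := x + t • (y - x) with hzdef
    have hzc : (1 - t) • x + t • y = z := by rw [hzdef]; module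
    -- convexity inequality
    have hconv := hsc x y (1 - t) t (by linarith) (le_of_lt ht0) (by ring)
    simp only at hconv
    rw [hzc, hgx, hgy] at hconv
    have hrw : ((1 - t : ℝ) : EReal) * ((gx : EReal) - (((μ / 2) * ‖x‖ ^ 2 : ℝ) : EReal))
        + ((t : ℝ) : EReal) * ((gy : EReal) - (((μ / 2) * ‖y‖ ^ 2 : ℝ) : EReal))
        = (((1 - t) * (gx - (μ / 2) * ‖x‖ ^ 2) + t * (gy - (μ / 2) * ‖y‖ ^ 2) : ℝ) : EReal) := by
      rw [← EReal.coe_sub, ← EReal.coe_sub, ← EReal.coe_mul, ← EReal.coe_mul, ← EReal.coe_add]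
    rw [hrw] at hconv
    -- g z is finite
    have hzne_bot := hpr.1 z
    have hzne_top : g z ≠ ⊤ := by
      intro htop
      rw [htop, EReal.top_sub_coe] at hconv
      exact (EReal.coe_ne_top _) (top_le_iff.mp hconv)
    set gz : ℝ := (g z).toReal with hgzdef
    have hgz : g z = (gz : EReal) := (EReal.coe_toReal hzne_top hzne_bot).symm
    rw [hgz, ← EReal.coe_sub, EReal.coe_le_coe_iff] at hconv
    -- subgradient inequality at z
    have hsub := h z
    have hzx : z - x = t • (y - x) := by rw [hzdef]; abel
    rw [hgx, hgz, hzx, real_inner_smul_right, ← EReal.coe_add, EReal.coe_le_coe_iff] at hsub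
    -- norm identity
    have hz2 : ‖z‖ ^ 2 = (1 - t) ^ 2 * ‖x‖ ^ 2 + 2 * ((1 - t) * t) * ⟪x, y⟫ + t ^ 2 * ‖y‖ ^ 2 := by
      rw [← hzc]
      simp only [← real_inner_self_eq_norm_sq, inner_add_left, inner_add_right,
        real_inner_smul_left, real_inner_smul_right, real_inner_comm y x]
      ring
    have hyx2 : c = ‖y‖ ^ 2 - 2 * ⟪x, y⟫ + ‖x‖ ^ 2 := by
      rw [hc]
      simp only [← real_inner_self_eq_norm_sq, inner_sub_left, inner_sub_right,
        real_inner_comm y x]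
      ring
    have hkey : (1 - t) * ‖x‖ ^ 2 + t * ‖y‖ ^ 2 - ‖z‖ ^ 2 = t * (1 - t) * c := by
      rw [hz2, hyx2]; ring
    have h3 : gz ≤ (1 - t) * gx + t * gy - μ / 2 * (t * (1 - t) * c) := by
      nlinarith [hkey, hconv]
    have hmain : t * (gx + ⟪v, y - x⟫ + μ / 2 * (1 - t) * c) ≤ t * gy := by nlinarith [hsub, h3]
    exact (mul_le_mul_iff_right₀ ht0).mp hmain
  refine le_of_forall_pos_le_add fun ε hε => ?_
  have hd : 0 < μ * c + 1 := by nlinarith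
  set t : ℝ := min (1/2) (ε / (μ * c + 1)) with ht
  have ht0 : 0 < t := lt_min (by norm_num) (div_pos hε hd)
  have ht1 : t < 1 := lt_of_le_of_lt (min_le_left _ _) (by norm_num)
  have htle : t ≤ ε / (μ * c + 1) := min_le_right _ _
  have h2 : t * (μ * c + 1) ≤ ε := by
    rw [← le_div_iff₀ hd]; exact htle
  have hstep := step t ht0 ht1
  nlinarith [hstep, h2, mul_nonneg (mul_nonneg hμ.le ht0.le) hc0, ht0.le]

set_option maxHeartbeats 1600000 in
/-- Case 2 of the Lyapunov argument: `V₁ ≤ V₀` for `N ≥ 2`.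
Here `y₁, w₁, x₁` are the first FDR iterates started from `(x₀, u₀)`,
`g'(y₁) = (x₀ + η₀ u₀ - y₁)/η₀ ∈ ∂g(y₁)` and `f'(x₁) = (w₁ - x₁)/η₁ ∈ ∂f(x₁)`. -/
theorem lyapunov_case2 {d : ℕ} (N : ℕ) (hN : 2 ≤ N) (μ : ℝ) (hμ : 0 < μ)
    (ν Ω : ℝ) (hν : ν = 1 / (1 + 4 * (N : ℝ) ^ 2 * μ ^ 2))
    (hΩ : Ω = 1 + 4 * (N : ℝ) * μ ^ 2)
    (f g : EuclideanSpace ℝ (Fin d) → EReal)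
    (hfcl : ClosedFn f) (hfcv : ConvexFn f) (hfpr : ProperFn f)
    (hgcl : ClosedFn g) (hgpr : ProperFn g) (hgsc : StrongConvexFn μ g)
    (xs us : EuclideanSpace ℝ (Fin d))
    (hgsub : SubdiffAt g xs us)
    (hfsub : SubdiffAt f xs (-us))
    (x0 u0 : EuclideanSpace ℝ (Fin d))
    (η : ℕ → ℝ)
    (hη : ∀ k, η k = 2 * (N : ℝ) * μ / (1 + 4 * (k : ℝ) * (N : ℝ) * μ ^ 2))
    (w0 y1 w1 x1 : EuclideanSpace ℝ (Fin d))
    (hw0 : w0 = x0 - η 0 • u0)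
    (hy1 : IsProx (η 0) g ((2 : ℝ) • x0 - w0) y1)
    (hw1 : w1 = (1 + η 1 / η 0) • y1 - (η 1 / η 0) • ((2 : ℝ) • x0 - w0))
    (hx1 : IsProx (η 1) f w1 x1)
    (hgy1 : SubdiffAt g y1 ((1 / η 0) • (x0 + η 0 • u0 - y1)))
    (hfx1 : SubdiffAt f x1 ((1 / η 1) • (w1 - x1))) :
    ν ^ 2 * ‖Ω • xs + (2 * (N : ℝ) * μ) • us - Ω • ((2 : ℝ) • x1 - w1)‖ ^ 2
      ≤ ν ^ 2 * ‖xs + (2 * (N : ℝ) * μ) • us - x0 - (2 * (N : ℝ) * μ) • u0‖ ^ 2 := by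

  classical
  -- scalar setup
  have hNr : (2:ℝ) ≤ (N:ℝ) := by exact_mod_cast hN
  obtain ⟨a, ha_def⟩ : ∃ a : ℝ, a = 2 * (N : ℝ) * μ := ⟨_, rfl⟩
  have ha : 0 < a := by rw [ha_def]; nlinarith
  have hΩpos : 0 < Ω := by rw [hΩ]; nlinarith
  have hΩ2 : Ω = 1 + 2 * a * μ := by rw [hΩ, ha_def]; ring
  have hη0 : η 0 = a := by rw [hη, ha_def]; norm_num
  have hη1 : η 1 = a / Ω := by rw [hη, hΩ, ha_def]; norm_num
  have hrat : η 1 / η 0 = 1 / Ω := by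
    rw [hη1, hη0]; field_simp; try ring
  obtain ⟨G, hG_def⟩ : ∃ G : EuclideanSpace ℝ (Fin d),
      G = (1 / η 0) • (x0 + η 0 • u0 - y1) := ⟨_, rfl⟩
  obtain ⟨F, hF_def⟩ : ∃ F : EuclideanSpace ℝ (Fin d),
      F = (1 / η 1) • (w1 - x1) := ⟨_, rfl⟩
  rw [← hG_def] at hgy1
  rw [← hF_def] at hfx1
  have haG : a • G = x0 + a • u0 - y1 := by
    rw [hG_def, hη0, smul_smul, mul_one_div, div_self ha.ne', one_smul]
  have hFw : (a / Ω) • F = w1 - x1 := by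
    rw [hF_def, hη1, smul_smul, mul_one_div,
      div_self (div_ne_zero ha.ne' hΩpos.ne'), one_smul]
  -- vector identities
  have h2x : (2 : ℝ) • x0 - w0 = y1 + a • G := by
    rw [hw0, hη0, haG]; module
  have hw1Ω : Ω • w1 = Ω • y1 - a • G := by
    rw [hw1, hrat, h2x]
    match_scalars <;> field_simp [hΩpos.ne'] <;> try ring
  have hx1e : x1 = w1 - (a / Ω) • F := by rw [hFw]; abel
  have hΩa : Ω * (a / Ω) = a := by field_simp
  have hx1Ω : Ω • x1 = Ω • y1 - a • G - a • F := by
    rw [hx1e, smul_sub, hw1Ω, smul_smul, hΩa]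
  have hx1xsΩ : Ω • (x1 - xs) = -(Ω • (xs - y1) + a • G + a • F) := by
    rw [smul_sub, hx1Ω, smul_sub]; abel
  have hL : Ω • xs + a • us - Ω • ((2 : ℝ) • x1 - w1)
      = Ω • (xs - y1) + a • us + a • G + (2 * a) • F := by
    have h1 : Ω • ((2 : ℝ) • x1 - w1) = (2 : ℝ) • (Ω • x1) - Ω • w1 := by
      module
    rw [h1, hx1Ω, hw1Ω]; module
  have hR : xs + a • us - x0 - a • u0 = (xs - y1) + a • us + (-a) • G := by
    rw [neg_smul, ← sub_eq_add_neg, haG]; abel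
  -- monotonicity inequality for g (strong)
  obtain ⟨gy1v, hgy1v⟩ := subdiff_finite hgpr hgy1
  obtain ⟨gxsv, hgxsv⟩ := subdiff_finite hgpr hgsub
  have hK1 := key_strong hμ hgpr hgsc hgy1 hgy1v hgxsv
  have hK2 := key_strong hμ hgpr hgsc hgsub hgxsv hgy1v
  have hM1 : μ * ‖xs - y1‖ ^ 2 ≤ ⟪us, xs - y1⟫ - ⟪G, xs - y1⟫ := by
    have hnr : ‖y1 - xs‖ = ‖xs - y1‖ := norm_sub_rev _ _
    have hi : ⟪us, y1 - xs⟫ = -⟪us, xs - y1⟫ := by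
      rw [show y1 - xs = -(xs - y1) by abel, inner_neg_right]
    rw [hnr, hi] at hK2
    linarith
  -- monotonicity inequality for f
  obtain ⟨fx1v, hfx1v⟩ := subdiff_finite hfpr hfx1
  obtain ⟨fxsv, hfxsv⟩ := subdiff_finite hfpr hfsub
  have hs1 := hfx1 xs
  rw [hfx1v, hfxsv, ← EReal.coe_add, EReal.coe_le_coe_iff] at hs1
  have hs2 := hfsub x1
  rw [hfxsv, hfx1v, ← EReal.coe_add, EReal.coe_le_coe_iff] at hs2
  have hM2 : 0 ≤ ⟪F, x1 - xs⟫ + ⟪us, x1 - xs⟫ := by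
    have h1 : ⟪F, xs - x1⟫ = -⟪F, x1 - xs⟫ := by
      rw [show xs - x1 = -(x1 - xs) by abel, inner_neg_right]
    have h2 : ⟪-us, x1 - xs⟫ = -⟪us, x1 - xs⟫ := by rw [inner_neg_left]
    rw [h1] at hs1; rw [h2] at hs2
    linarith
  -- scalar form of the f-inequality, scaled by Ω
  have hM2s : 0 ≤ -(Ω * ⟪F, xs - y1⟫) - a * ⟪F, G⟫ - a * ‖F‖ ^ 2
      - Ω * ⟪us, xs - y1⟫ - a * ⟪us, G⟫ - a * ⟪us, F⟫ := by
    have h := mul_nonneg hΩpos.le hM2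
    have he : Ω * (⟪F, x1 - xs⟫ + ⟪us, x1 - xs⟫)
        = -(Ω * ⟪F, xs - y1⟫) - a * ⟪F, G⟫ - a * ‖F‖ ^ 2
          - Ω * ⟪us, xs - y1⟫ - a * ⟪us, G⟫ - a * ⟪us, F⟫ := by
      rw [show Ω * (⟪F, x1 - xs⟫ + ⟪us, x1 - xs⟫)
          = ⟪F, Ω • (x1 - xs)⟫ + ⟪us, Ω • (x1 - xs)⟫ by
        rw [real_inner_smul_right, real_inner_smul_right]; ring, hx1xsΩ]
      simp only [inner_neg_right, inner_add_right, real_inner_smul_right,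
        real_inner_self_eq_norm_sq]
      ring
    rw [he] at h
    exact h
  -- expansion of squared norms
  have expand : ∀ c1 c2 c3 c4 : ℝ,
      ‖c1 • (xs - y1) + c2 • us + c3 • G + c4 • F‖ ^ 2
      = c1 ^ 2 * ‖xs - y1‖ ^ 2 + c2 ^ 2 * ‖us‖ ^ 2 + c3 ^ 2 * ‖G‖ ^ 2
        + c4 ^ 2 * ‖F‖ ^ 2
        + 2 * c1 * c2 * ⟪us, xs - y1⟫ + 2 * c1 * c3 * ⟪G, xs - y1⟫
        + 2 * c1 * c4 * ⟪F, xs - y1⟫ + 2 * c2 * c3 * ⟪us, G⟫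
        + 2 * c2 * c4 * ⟪us, F⟫ + 2 * c3 * c4 * ⟪F, G⟫ := by
    intro c1 c2 c3 c4
    rw [← real_inner_self_eq_norm_sq]
    simp only [inner_add_left, inner_add_right, real_inner_smul_left,
      real_inner_smul_right]
    rw [real_inner_comm (xs - y1) us, real_inner_comm (xs - y1) G,
      real_inner_comm (xs - y1) F, real_inner_comm G us,
      real_inner_comm F us, real_inner_comm G F]
    simp only [real_inner_self_eq_norm_sq]
    ring
  have hRv : xs + a • us - x0 - a • u0
      = (1 : ℝ) • (xs - y1) + a • us + (-a) • G + (0 : ℝ) • F := by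
    rw [hR]; module
  rw [← ha_def, hL, hRv, expand, expand]
  -- final polynomial inequality
  have p1 : 0 ≤ (4 * a * (1 + a * μ))
      * (⟪us, xs - y1⟫ - ⟪G, xs - y1⟫ - μ * ‖xs - y1‖ ^ 2) := by
    have h1 : (0:ℝ) ≤ 4 * a * (1 + a * μ) := by nlinarith
    exact mul_nonneg h1 (by linarith)
  have p2 : 0 ≤ 4 * a * (-(Ω * ⟪F, xs - y1⟫) - a * ⟪F, G⟫ - a * ‖F‖ ^ 2
      - Ω * ⟪us, xs - y1⟫ - a * ⟪us, G⟫ - a * ⟪us, F⟫) := by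
    have h1 : (0:ℝ) ≤ 4 * a := by linarith
    exact mul_nonneg h1 hM2s
  apply mul_le_mul_of_nonneg_left _ (sq_nonneg ν)
  rw [hΩ2] at p2 ⊢
  linarith [p1, p2]
end
end

section
/- Let N ≥ 3, μ > 0, ν = 1/(1 + 4N²μ²), and Δ_j = 1 + 4jNμ². Let f : ℝ^d → ℝ ∪ {∞} be closed, convex, proper and g : ℝ^d → ℝ ∪ {∞} be closed, proper, μ-strongly convex, with primal-dual solution (x⋆, u⋆) satisfying u⋆ ∈ ∂g(x⋆), −u⋆ ∈ ∂f(x⋆). Fix 1 ≤ k ≤ N−2 and let x_k, w_k, y_{k+1}, w_{k+1}, x_{k+1} be FDR iterates, and set g'(y_{k+1}) = (2x_k − w_k − y_{k+1})/η_k ∈ ∂g(y_{k+1}) and f'(x_{k+1}) = (w_{k+1} − x_{k+1})/η_{k+1} ∈ ∂f(x_{k+1}). Then ν²‖Δ_{k+1} x⋆ + 2Nμ u⋆ − Δ_{k+1}(2x_{k+1} − w_{k+1})‖² ≤ ν²‖Δ_k x⋆ + 2Nμ u⋆ − Δ_k(2x_k − w_k)‖². -/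
noncomputable section

open scoped RealInnerProductSpace
open Finset

variable {E : Type*} [NormedAddCommGroup E] [InnerProductSpace ℝ E]

/- ### Auxiliary lemmas -/

lemma subdiff_ne_top {f : E → EReal} (hpr : ProperFn f) {a va : E} (h : SubdiffAt f a va) :
    f a ≠ ⊤ := by
  obtain ⟨hbot, z, hz⟩ := hpr
  intro hT
  have h2 := h z
  rw [hT, EReal.top_add_of_ne_bot (by simp), top_le_iff] at h2
  exact hz h2

lemma subdiff_real {f : E → EReal} (hpr : ProperFn f) {a va : E} (b : E)
    (ha : SubdiffAt f a va) (hbtop : f b ≠ ⊤) :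
    (f a).toReal + ⟪va, b - a⟫ ≤ (f b).toReal := by
  have hat := subdiff_ne_top hpr ha
  have h := ha b
  rw [← EReal.coe_toReal hat (hpr.1 a), ← EReal.coe_toReal hbtop (hpr.1 b),
    ← EReal.coe_add] at h
  exact_mod_cast h

lemma mono_subdiff {f : E → EReal} (hpr : ProperFn f) {a va b vb : E}
    (ha : SubdiffAt f a va) (hb : SubdiffAt f b vb) :
    0 ≤ ⟪vb - va, b - a⟫ := by
  have h1 := subdiff_real hpr b ha (subdiff_ne_top hpr hb)
  have h2 := subdiff_real hpr a hb (subdiff_ne_top hpr ha)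
  have heq : ⟪vb, a - b⟫ = -⟪vb, b - a⟫ := by
    rw [← inner_neg_right]; congr 1; abel
  rw [heq] at h2
  rw [inner_sub_left]
  linarith

lemma norm_convex_id (a b : E) (t : ℝ) :
    ‖a + t • (b - a)‖ ^ 2 = (1 - t) * ‖a‖ ^ 2 + t * ‖b‖ ^ 2 - t * (1 - t) * ‖b - a‖ ^ 2 := by
  rw [← real_inner_self_eq_norm_sq, ← real_inner_self_eq_norm_sq, ← real_inner_self_eq_norm_sq,
    ← real_inner_self_eq_norm_sq]
  simp only [inner_add_left, inner_add_right, inner_sub_left, inner_sub_right,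
    real_inner_smul_left, real_inner_smul_right]
  simp only [real_inner_comm b a]
  ring

/-- Strengthened subgradient inequality for strongly convex functions. -/
lemma strong_subdiff_real {μ : ℝ} (hμ : 0 < μ) {g : E → EReal}
    (hpr : ProperFn g) (hsc : StrongConvexFn μ g) {a va : E} (b : E)
    (ha : SubdiffAt g a va) (hbtop : g b ≠ ⊤) :
    (g a).toReal + ⟪va, b - a⟫ + μ / 2 * ‖b - a‖ ^ 2 ≤ (g b).toReal := by
  set A := (g a).toReal with hA
  set B := (g b).toReal with hB
  have hat := subdiff_ne_top hpr ha
  have hga : g a = (A : EReal) := (EReal.coe_toReal hat (hpr.1 a)).symm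
  have hgb : g b = (B : EReal) := (EReal.coe_toReal hbtop (hpr.1 b)).symm
  set D := ‖b - a‖ ^ 2 with hD
  have hD0 : 0 ≤ D := by positivity
  have key : ∀ t : ℝ, 0 < t → t < 1 → ⟪va, b - a⟫ + μ / 2 * (1 - t) * D ≤ B - A := by
    intro t ht0 ht1
    set z := a + t • (b - a) with hz
    have hc := hsc a b (1 - t) t (by linarith) (by linarith) (by ring)
    simp only at hc
    have hzeq : (1 - t) • a + t • b = z := by
      rw [hz]; module
    rw [hzeq] at hc
    have hrhs : ((1 - t : ℝ) : EReal) * (g a - (((μ / 2) * ‖a‖ ^ 2 : ℝ) : EReal))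
        + ((t : ℝ) : EReal) * (g b - (((μ / 2) * ‖b‖ ^ 2 : ℝ) : EReal))
        = (((1 - t) * (A - μ / 2 * ‖a‖ ^ 2) + t * (B - μ / 2 * ‖b‖ ^ 2) : ℝ) : EReal) := by
      rw [hga, hgb, ← EReal.coe_sub, ← EReal.coe_sub, ← EReal.coe_mul, ← EReal.coe_mul,
        ← EReal.coe_add]
    rw [hrhs] at hc
    have hztop : g z ≠ ⊤ := by
      intro hT
      rw [hT] at hc
      have htop : (⊤ : EReal) - (((μ / 2) * ‖z‖ ^ 2 : ℝ) : EReal) = ⊤ := by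
        rw [EReal.top_sub_coe]
      rw [htop, top_le_iff] at hc
      exact (EReal.coe_ne_top _) hc
    set Z := (g z).toReal with hZ
    have hgz : g z = (Z : EReal) := (EReal.coe_toReal hztop (hpr.1 z)).symm
    rw [hgz, ← EReal.coe_sub, EReal.coe_le_coe_iff] at hc
    have hsub := ha z
    rw [hga, hgz, ← EReal.coe_add, EReal.coe_le_coe_iff] at hsub
    have hin : ⟪va, z - a⟫ = t * ⟪va, b - a⟫ := by
      rw [hz, add_sub_cancel_left, real_inner_smul_right]
    rw [hin] at hsub
    have hn : ‖z‖ ^ 2 = (1 - t) * ‖a‖ ^ 2 + t * ‖b‖ ^ 2 - t * (1 - t) * D := by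
      rw [hz, hD]; exact norm_convex_id a b t
    rw [hn] at hc
    have hc2 : Z ≤ (1 - t) * A + t * B - μ / 2 * t * (1 - t) * D := by nlinarith [hc]
    have hf : t * (⟪va, b - a⟫ + μ / 2 * (1 - t) * D) ≤ t * (B - A) := by
      nlinarith [hsub, hc2]
    exact le_of_mul_le_mul_left (by linarith [hf]) ht0
  have goal2 : ⟪va, b - a⟫ + μ / 2 * D ≤ B - A := by
    refine le_of_forall_pos_le_add fun ε hε => ?_
    set t : ℝ := min (1/2) (ε / (μ / 2 * D + 1)) with ht
    have hden : 0 < μ / 2 * D + 1 := by positivity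
    have ht0 : 0 < t := lt_min (by norm_num) (by positivity)
    have ht1 : t < 1 := lt_of_le_of_lt (min_le_left _ _) (by norm_num)
    have hk := key t ht0 ht1
    have htle : t ≤ ε / (μ / 2 * D + 1) := min_le_right _ _
    have hεb : μ / 2 * t * D ≤ ε := by
      have h1 : μ / 2 * t * D ≤ μ / 2 * (ε / (μ / 2 * D + 1)) * D := by
        have := mul_le_mul_of_nonneg_left htle (le_of_lt (half_pos hμ))
        nlinarith [hD0]
      have h2 : μ / 2 * (ε / (μ / 2 * D + 1)) * D ≤ ε := by
        calc μ / 2 * (ε / (μ / 2 * D + 1)) * D = ε * ((μ / 2 * D) / (μ / 2 * D + 1)) := by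
              ring
          _ ≤ ε * 1 := by
              apply mul_le_mul_of_nonneg_left _ (le_of_lt hε)
              rw [div_le_one hden]; linarith
          _ = ε := mul_one ε
      linarith
    nlinarith [hk]
  linarith

/-- Strong monotonicity of the subdifferential of a strongly convex function. -/
lemma strong_mono {μ : ℝ} (hμ : 0 < μ) {g : E → EReal}
    (hpr : ProperFn g) (hsc : StrongConvexFn μ g) {a va b vb : E}
    (ha : SubdiffAt g a va) (hb : SubdiffAt g b vb) :
    μ * ‖b - a‖ ^ 2 ≤ ⟪vb - va, b - a⟫ := by
  have h1 := strong_subdiff_real hμ hpr hsc b ha (subdiff_ne_top hpr hb)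
  have h2 := strong_subdiff_real hμ hpr hsc a hb (subdiff_ne_top hpr ha)
  have hnn : ‖a - b‖ = ‖b - a‖ := norm_sub_rev a b
  rw [hnn] at h2
  have hin : ⟪vb, a - b⟫ = -⟪vb, b - a⟫ := by
    rw [← inner_neg_right]; congr 1; abel
  rw [hin] at h2
  rw [inner_sub_left]
  linarith

/-- The key abstract inequality. -/
lemma key_ineq (μ s Δk ηk1 : ℝ) (hs : 0 < s) (hΔk : 0 < Δk) (hμ : 0 < μ)
    (h2 : (Δk + 2 * μ * s) * ηk1 = s)
    (e G F us : E)
    (hA : μ * ‖e‖ ^ 2 ≤ ⟪us - G, e⟫)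
    (hB : ⟪F + us, e + ηk1 • (G + F)⟫ ≤ 0) :
    ‖(Δk + 2 * μ * s) • e + s • (G + (2:ℝ) • F) + s • us‖ ^ 2
      ≤ ‖Δk • e - s • G + s • us‖ ^ 2 := by
  have hΔ1 : 0 < Δk + 2 * μ * s := by positivity
  simp only [inner_add_left, inner_add_right, real_inner_smul_right] at hB
  rw [real_inner_comm e F, real_inner_comm e us, real_inner_comm G F,
    real_inner_comm G us, real_inner_comm F us] at hB
  simp only [inner_sub_left, ← real_inner_self_eq_norm_sq] at hA
  rw [real_inner_comm e us, real_inner_comm e G] at hA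
  have hB1 : (Δk + 2 * μ * s) * (⟪e, F⟫ + ⟪e, us⟫)
      + s * (⟪G, F⟫ + ⟪F, F⟫ + ⟪G, us⟫ + ⟪F, us⟫) ≤ 0 := by
    have hm := mul_le_mul_of_nonneg_left hB (le_of_lt hΔ1)
    have h3 : ∀ X : ℝ, (Δk + 2 * μ * s) * (ηk1 * X) = s * X := by
      intro X; rw [← mul_assoc, h2]
    have h4 := h3 (⟪G, F⟫ + ⟪F, F⟫)
    have h5 := h3 (⟪G, us⟫ + ⟪F, us⟫)
    nlinarith [hm, h4, h5]
  have hA1 : (2 * s * (2 * Δk + 2 * μ * s)) * (μ * ⟪e, e⟫ - (⟪e, us⟫ - ⟪e, G⟫)) ≤ 0 :=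
    mul_nonpos_of_nonneg_of_nonpos (by positivity) (by linarith)
  have hB2 : (4 * s) * ((Δk + 2 * μ * s) * (⟪e, F⟫ + ⟪e, us⟫)
      + s * (⟪G, F⟫ + ⟪F, F⟫ + ⟪G, us⟫ + ⟪F, us⟫)) ≤ 0 :=
    mul_nonpos_of_nonneg_of_nonpos (by positivity) hB1
  rw [← real_inner_self_eq_norm_sq, ← real_inner_self_eq_norm_sq]
  simp only [inner_add_left, inner_add_right, inner_sub_left, inner_sub_right,
    real_inner_smul_left, real_inner_smul_right]
  simp only [real_inner_comm e G, real_inner_comm e F, real_inner_comm e us,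
    real_inner_comm G F, real_inner_comm G us, real_inner_comm F us]
  linarith [hA1, hB2]

/-- Case 3 of the Lyapunov argument: `V_{k+1} ≤ V_k` for
`1 ≤ k ≤ N - 2`, `N ≥ 3`.  Here `Δ_j = 1 + 4jNμ²`, and
`g'(y_{k+1}) = (2x_k - w_k - y_{k+1})/η_k ∈ ∂g(y_{k+1})`,
`f'(x_{k+1}) = (w_{k+1} - x_{k+1})/η_{k+1} ∈ ∂f(x_{k+1})`. -/
theorem lyapunov_case3 {d : ℕ} (N : ℕ) (hN : 3 ≤ N) (μ : ℝ) (hμ : 0 < μ)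
    (ν : ℝ) (hν : ν = 1 / (1 + 4 * (N : ℝ) ^ 2 * μ ^ 2))
    (f g : EuclideanSpace ℝ (Fin d) → EReal)
    (hfcl : ClosedFn f) (hfcv : ConvexFn f) (hfpr : ProperFn f)
    (hgcl : ClosedFn g) (hgpr : ProperFn g) (hgsc : StrongConvexFn μ g)
    (xs us : EuclideanSpace ℝ (Fin d))
    (hgsub : SubdiffAt g xs us)
    (hfsub : SubdiffAt f xs (-us))
    (x0 u0 : EuclideanSpace ℝ (Fin d))
    (η : ℕ → ℝ)
    (hη : ∀ j, η j = 2 * (N : ℝ) * μ / (1 + 4 * (j : ℝ) * (N : ℝ) * μ ^ 2))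
    (x w y : ℕ → EuclideanSpace ℝ (Fin d))
    (hx0 : x 0 = x0)
    (hw0 : w 0 = x0 - η 0 • u0)
    (hy : ∀ j < N, IsProx (η j) g ((2 : ℝ) • x j - w j) (y (j + 1)))
    (hw : ∀ j < N,
      w (j + 1) = (1 + η (j + 1) / η j) • y (j + 1)
        - (η (j + 1) / η j) • ((2 : ℝ) • x j - w j))
    (hx : ∀ j < N, IsProx (η (j + 1)) f (w (j + 1)) (x (j + 1)))
    (k : ℕ) (hk1 : 1 ≤ k) (hk2 : k ≤ N - 2)
    (hgyk : SubdiffAt g (y (k + 1))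
      ((1 / η k) • ((2 : ℝ) • x k - w k - y (k + 1))))
    (hfxk : SubdiffAt f (x (k + 1))
      ((1 / η (k + 1)) • (w (k + 1) - x (k + 1)))) :
    ν ^ 2 * ‖(1 + 4 * ((k : ℝ) + 1) * (N : ℝ) * μ ^ 2) • xs
        + (2 * (N : ℝ) * μ) • us
        - (1 + 4 * ((k : ℝ) + 1) * (N : ℝ) * μ ^ 2) • ((2 : ℝ) • x (k + 1) - w (k + 1))‖ ^ 2
      ≤ ν ^ 2 * ‖(1 + 4 * (k : ℝ) * (N : ℝ) * μ ^ 2) • xs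
        + (2 * (N : ℝ) * μ) • us
        - (1 + 4 * (k : ℝ) * (N : ℝ) * μ ^ 2) • ((2 : ℝ) • x k - w k)‖ ^ 2 := by
  have hkN : k < N := by omega
  have hNr : (0 : ℝ) < (N : ℝ) := by exact_mod_cast (by omega : 0 < N)
  have hkr : (0 : ℝ) ≤ (k : ℝ) := Nat.cast_nonneg k
  -- stepsize facts
  have hηk_pos : 0 < η k := by rw [hη k]; positivity
  have hηk_ne : η k ≠ 0 := ne_of_gt hηk_pos
  have hηk1_pos : 0 < η (k + 1) := by
    rw [hη (k + 1)]
    have h0 : (0:ℝ) ≤ (↑(k+1) : ℝ) := Nat.cast_nonneg _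
    positivity
  have hηk1_ne : η (k + 1) ≠ 0 := ne_of_gt hηk1_pos
  have hks : (1 + 4 * (k : ℝ) * (N : ℝ) * μ ^ 2) * η k = 2 * (N : ℝ) * μ := by
    rw [hη k]
    have hd : (0:ℝ) < 1 + 4 * (k : ℝ) * (N : ℝ) * μ ^ 2 := by positivity
    field_simp
  have h2 : (1 + 4 * (k : ℝ) * (N : ℝ) * μ ^ 2 + 2 * μ * (2 * (N : ℝ) * μ)) * η (k + 1)
      = 2 * (N : ℝ) * μ := by
    rw [hη (k + 1)]
    push_cast
    have hd : (0:ℝ) < 1 + 4 * ((k : ℝ) + 1) * (N : ℝ) * μ ^ 2 := by positivity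
    field_simp
    ring
  -- subgradient vectors (opaque)
  obtain ⟨G, hG_def⟩ : ∃ G, G = (1 / η k) • ((2 : ℝ) • x k - w k - y (k + 1)) := ⟨_, rfl⟩
  obtain ⟨F, hF_def⟩ : ∃ F, F = (1 / η (k + 1)) • (w (k + 1) - x (k + 1)) := ⟨_, rfl⟩
  rw [← hG_def] at hgyk
  rw [← hF_def] at hfxk
  have heG : (2 : ℝ) • x k - w k = y (k + 1) + η k • G := by
    rw [hG_def, smul_smul, mul_one_div_cancel hηk_ne, one_smul]; abel
  have hwk1 : w (k + 1) = y (k + 1) - η (k + 1) • G := by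
    rw [hw k hkN, heG]
    match_scalars <;> field_simp <;> ring
  have hxk1 : x (k + 1) = w (k + 1) - η (k + 1) • F := by
    rw [hF_def, smul_smul, mul_one_div_cancel hηk1_ne, one_smul]; abel
  -- hypothesis (A): strong monotonicity
  have hA : μ * ‖xs - y (k + 1)‖ ^ 2 ≤ ⟪us - G, xs - y (k + 1)⟫ := by
    have h := strong_mono hμ hgpr hgsc hgsub hgyk
    rw [norm_sub_rev] at h
    have hiq : ⟪us - G, xs - y (k + 1)⟫ = ⟪G - us, y (k + 1) - xs⟫ := by
      rw [show us - G = -(G - us) from (neg_sub G us).symm,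
        show xs - y (k + 1) = -(y (k + 1) - xs) from (neg_sub _ _).symm, inner_neg_neg]
    rw [hiq]
    exact h
  -- hypothesis (B): monotonicity of ∂f
  have hB : ⟪F + us, (xs - y (k + 1)) + η (k + 1) • (G + F)⟫ ≤ 0 := by
    have h := mono_subdiff hfpr hfsub hfxk
    rw [sub_neg_eq_add] at h
    have hxe : (xs - y (k + 1)) + η (k + 1) • (G + F) = -(x (k + 1) - xs) := by
      rw [hxk1, hwk1]; match_scalars <;> ring
    rw [hxe, inner_neg_right]
    linarith
  -- the key inequality
  have hmain := key_ineq μ (2 * (N : ℝ) * μ) (1 + 4 * (k : ℝ) * (N : ℝ) * μ ^ 2) (η (k + 1))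
    (by positivity) (by positivity) hμ h2 (xs - y (k + 1)) G F us hA hB
  -- rewrite both sides
  have Ea : (1 + 4 * ((k : ℝ) + 1) * (N : ℝ) * μ ^ 2) • xs + (2 * (N : ℝ) * μ) • us
      - (1 + 4 * ((k : ℝ) + 1) * (N : ℝ) * μ ^ 2) • ((2 : ℝ) • x (k + 1) - w (k + 1))
      = (1 + 4 * (k : ℝ) * (N : ℝ) * μ ^ 2 + 2 * μ * (2 * (N : ℝ) * μ)) • (xs - y (k + 1))
        + (2 * (N : ℝ) * μ) • (G + (2:ℝ) • F) + (2 * (N : ℝ) * μ) • us := by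
    rw [hxk1, hwk1]
    match_scalars
    all_goals try ring1
    · linear_combination h2
    · linear_combination 2 * h2
  have Eb : (1 + 4 * (k : ℝ) * (N : ℝ) * μ ^ 2) • xs + (2 * (N : ℝ) * μ) • us
      - (1 + 4 * (k : ℝ) * (N : ℝ) * μ ^ 2) • ((2 : ℝ) • x k - w k)
      = (1 + 4 * (k : ℝ) * (N : ℝ) * μ ^ 2) • (xs - y (k + 1)) - (2 * (N : ℝ) * μ) • G
        + (2 * (N : ℝ) * μ) • us := by
    rw [heG]
    match_scalars
    all_goals try ring1
    · linear_combination -hks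
  rw [← Ea, ← Eb] at hmain
  exact mul_le_mul_of_nonneg_left hmain (sq_nonneg ν)
end
end

section
/- Fix N ∈ ℕ, μ > 0, u₀ ∈ span{e_{−1}}, and t = Σ_{i=0}^{2N} t_i e_i with all t_i > 0. Let S_{−1} = span{e_{−1}} and S_k = span{e_{−1}, e₀, …, e_k} for k = 0,…,2N. Then for every γ > 0 and every k ∈ {−1, 0, …, 2N−1}: if y ∈ S_k then Π_{D_t}(y + γu₀) ∈ S_{k+1}, and if y ∈ S_k then Π_{C_t}((y − γu₀)/(1 + γμ)) ∈ S_{k+1} (the proximal zero-chain property). -/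
noncomputable section

open scoped RealInnerProductSpace
open Finset

variable {E : Type*} [NormedAddCommGroup E] [InnerProductSpace ℝ E]

open Classical in
/-- Indicator function of a set, as an extended-real-valued function. -/
def indE (S : Set E) (x : E) : EReal := if x ∈ S then 0 else ⊤

/-- `p` is the (a) Euclidean projection of `x` onto `S`. -/
def IsProj (S : Set E) (x p : E) : Prop :=
  p ∈ S ∧ ∀ q ∈ S, ‖p - x‖ ≤ ‖q - x‖

/-- Normal cone of the set `S` at `z`. -/
def NormalCone (S : Set E) (z : E) : Set E :=
  {v | ∀ w ∈ S, ⟪v, w - z⟫ ≤ 0}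

/-- The set `C_t` of the worst-case construction.  Here `e 0` plays the role of the
paper's `e₋₁` and `e (i+1)` plays the role of the paper's `eᵢ`, so the paper's
coordinate `y_i = ⟨y, e_i⟩` is `⟪y, e (i+1)⟫`. -/
def Cset (N : ℕ) (e : ℕ → E) (t : ℕ → ℝ) : Set E :=
  {y | ⟪y, e 0⟫ = 0 ∧ ⟪y, e 1⟫ = t 0 ∧
    ∀ k, 1 ≤ k → k ≤ N →
      (⟪y, e (2 * k)⟫, ⟪y, e (2 * k + 1)⟫)
        ∈ segment ℝ (0 : ℝ × ℝ) (t (2 * k - 1), t (2 * k))}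

/-- The set `D_t` of the worst-case construction (same index convention as `Cset`). -/
def Dset (N : ℕ) (e : ℕ → E) (t : ℕ → ℝ) : Set E :=
  {y | ⟪y, e 0⟫ = 0 ∧
    ∀ k < N,
      (⟪y, e (2 * k + 1)⟫, ⟪y, e (2 * k + 2)⟫)
        ∈ segment ℝ (0 : ℝ × ℝ) (t (2 * k), t (2 * k + 1))}

lemma inner_trunc {ι : Type*} [DecidableEq ι] {b : ι → E} (hb : Orthonormal ℝ b)
    (p : E) (T : Finset ι) (j : ι) :
    ⟪p - ∑ i ∈ T, ⟪p, b i⟫ • b i, b j⟫ = if j ∈ T then 0 else ⟪p, b j⟫ := by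
  classical
  rw [inner_sub_left, sum_inner]
  have h := orthonormal_iff_ite.mp hb
  simp only [real_inner_smul_left, h, mul_ite, mul_one, mul_zero]
  rw [Finset.sum_ite_eq' T j (fun i => ⟪p, b i⟫)]
  by_cases hj : j ∈ T <;> simp [hj]

lemma trunc_zero {ι : Type*} [DecidableEq ι] {b : ι → E} (hb : Orthonormal ℝ b)
    (S : Set E) (x p : E) (T : Finset ι)
    (hx : ∀ i ∈ T, ⟪x, b i⟫ = 0)
    (hp : IsProj S x p)
    (hmem : p - ∑ i ∈ T, ⟪p, b i⟫ • b i ∈ S) :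
    ∀ j ∈ T, ⟪p, b j⟫ = 0 := by
  classical
  set w := ∑ i ∈ T, ⟪p, b i⟫ • b i with hw
  have hqw : ∀ j ∈ T, ⟪p - w, b j⟫ = 0 := fun j hj => by
    rw [hw, inner_trunc hb, if_pos hj]
  have horth : ⟪p - w - x, w⟫ = 0 := by
    rw [hw, inner_sum]
    refine Finset.sum_eq_zero fun i hi => ?_
    rw [real_inner_smul_right, inner_sub_left, hqw i hi, hx i hi]
    ring
  have hnorm : ‖p - x‖ ^ 2 = ‖p - w - x‖ ^ 2 + ‖w‖ ^ 2 := by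
    have h1 : p - x = (p - w - x) + w := by abel
    rw [h1, norm_add_sq_real, horth]; ring
  have hle : ‖p - x‖ ≤ ‖p - w - x‖ := hp.2 (p - w) hmem
  have hsq : ‖p - x‖ ^ 2 ≤ ‖p - w - x‖ ^ 2 :=
    pow_le_pow_left₀ (norm_nonneg _) hle 2
  have hw2 : ‖w‖ ^ 2 = 0 := le_antisymm (by linarith) (sq_nonneg _)
  have hw0 : w = 0 := norm_eq_zero.mp ((pow_eq_zero_iff two_ne_zero).mp hw2)
  intro j hj
  have h2 := hqw j hj
  rw [hw0, sub_zero] at h2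
  exact h2

lemma proj_coords {n : ℕ} (e : ℕ → EuclideanSpace ℝ (Fin n))
    (he : Orthonormal ℝ (fun i : Fin n => e i))
    (S : Set (EuclideanSpace ℝ (Fin n))) (x p : EuclideanSpace ℝ (Fin n)) (r : ℕ)
    (hx : ∀ i : Fin n, r < (i : ℕ) → ⟪x, e i⟫ = 0)
    (hp : IsProj S x p)
    (hmem : p - ∑ i ∈ Finset.univ.filter (fun i : Fin n => r < (i : ℕ)),
        ⟪p, e (i : ℕ)⟫ • e (i : ℕ) ∈ S) :
    p ∈ Submodule.span ℝ (e '' Set.Iic r) := by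
  classical
  have hz : ∀ j ∈ Finset.univ.filter (fun i : Fin n => r < (i : ℕ)), ⟪p, e (j : ℕ)⟫ = 0 :=
    trunc_zero he S x p _ (fun i hi => hx i (by simpa using hi)) hp hmem
  have hspan : ⊤ ≤ Submodule.span ℝ (Set.range fun i : Fin n => e i) := by
    rw [he.linearIndependent.span_eq_top_of_card_eq_finrank' (by simp)]
  let b : OrthonormalBasis (Fin n) ℝ (EuclideanSpace ℝ (Fin n)) := OrthonormalBasis.mk he hspan
  have hb : ∀ i : Fin n, b i = e i := fun i => by
    simp [b, OrthonormalBasis.coe_mk]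
  have hrepr : ∑ i, ⟪b i, p⟫ • b i = p := b.sum_repr' p
  rw [← hrepr]
  refine Submodule.sum_mem _ fun i _ => ?_
  by_cases hir : r < (i : ℕ)
  · have h0 : ⟪p, e (i : ℕ)⟫ = 0 := hz i (by simp [hir])
    rw [hb, real_inner_comm, h0, zero_smul]
    exact Submodule.zero_mem _
  · refine Submodule.smul_mem _ _ (Submodule.subset_span ?_)
    rw [hb]
    exact ⟨(i : ℕ), Nat.le_of_not_lt hir, rfl⟩

/-- the proximal zero-chain property.  With
`S_k = span{e₋₁, e₀, …, e_k}` (here `e 0` plays the paper's `e₋₁` and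
`e (i+1)` the paper's `eᵢ`, so the paper's `S_k` is the span of
`e '' Set.Iic (k+1)`; `m = k + 1` ranges over `0, …, 2N`): for every `γ > 0`,
if `y ∈ S_k` then `Π_{D_t}(y + γu₀) ∈ S_{k+1}` and
`Π_{C_t}((y - γu₀)/(1 + γμ)) ∈ S_{k+1}`. -/
theorem proximal_zero_chain (N : ℕ) (μ : ℝ) (hμ : 0 < μ)
    (e : ℕ → EuclideanSpace ℝ (Fin (2 * N + 2)))
    (he : Orthonormal ℝ (fun i : Fin (2 * N + 2) => e i))
    (u0 : EuclideanSpace ℝ (Fin (2 * N + 2)))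
    (hu0 : u0 ∈ Submodule.span ℝ ({e 0} : Set (EuclideanSpace ℝ (Fin (2 * N + 2)))))
    (t : ℕ → ℝ) (ht : ∀ i ≤ 2 * N, 0 < t i)
    (γ : ℝ) (hγ : 0 < γ)
    (m : ℕ) (hm : m ≤ 2 * N)
    (y : EuclideanSpace ℝ (Fin (2 * N + 2)))
    (hy : y ∈ Submodule.span ℝ (e '' Set.Iic m)) :
    (∀ p, IsProj (Dset N e t) (y + γ • u0) p →
      p ∈ Submodule.span ℝ (e '' Set.Iic (m + 1))) ∧
    (∀ p, IsProj (Cset N e t) ((1 / (1 + γ * μ)) • (y - γ • u0)) p →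
      p ∈ Submodule.span ℝ (e '' Set.Iic (m + 1))) := by
  classical
  have hu0' : u0 ∈ Submodule.span ℝ (e '' Set.Iic m) := by
    refine Submodule.span_mono ?_ hu0
    rw [Set.singleton_subset_iff]
    exact Set.mem_image_of_mem e (Set.mem_Iic.mpr (Nat.zero_le m))
  -- vanishing of high coordinates of anything in the span
  have key : ∀ x : EuclideanSpace ℝ (Fin (2 * N + 2)),
      x ∈ Submodule.span ℝ (e '' Set.Iic m) →
      ∀ i : Fin (2 * N + 2), m < (i : ℕ) → ⟪x, e i⟫ = 0 := by
    intro x hxs i him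
    have hsub : Submodule.span ℝ (e '' Set.Iic m)
        ≤ LinearMap.ker (innerSL ℝ (e ((i : ℕ) : ℕ)) : EuclideanSpace ℝ (Fin (2 * N + 2)) →ₗ[ℝ] ℝ) := by
      rw [Submodule.span_le]
      rintro z ⟨j, hj, rfl⟩
      have hj' : j ≤ m := hj
      have hjn : j < 2 * N + 2 := by omega
      have hne : i ≠ (⟨j, hjn⟩ : Fin (2 * N + 2)) := by
        intro hcon
        have : (i : ℕ) = j := congrArg Fin.val hcon
        omega
      have h0 : ⟪e (i : ℕ), e ((⟨j, hjn⟩ : Fin (2 * N + 2)) : ℕ)⟫ = 0 := he.2 hne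
      simpa using h0
    have hk := hsub hxs
    rw [LinearMap.mem_ker] at hk
    rw [real_inner_comm]
    simpa using hk
  constructor
  · -- D part
    intro p hp
    have hxD : (y + γ • u0) ∈ Submodule.span ℝ (e '' Set.Iic m) :=
      Submodule.add_mem _ hy (Submodule.smul_mem _ _ hu0')
    obtain ⟨r, hre, hmr, hrm⟩ : ∃ r, Even r ∧ m ≤ r ∧ r ≤ m + 1 := by
      rcases Nat.even_or_odd m with h | h
      · exact ⟨m, h, le_refl _, Nat.le_succ _⟩
      · exact ⟨m + 1, h.add_one, Nat.le_succ _, le_refl _⟩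
    set T : Finset (Fin (2 * N + 2)) := Finset.univ.filter (fun i : Fin (2 * N + 2) => r < (i : ℕ))
      with hT
    set q : EuclideanSpace ℝ (Fin (2 * N + 2)) := p - ∑ i ∈ T, ⟪p, e (i : ℕ)⟫ • e (i : ℕ)
      with hqdef
    have hq0 : ∀ a : ℕ, a < 2 * N + 2 → r < a → ⟪q, e a⟫ = 0 := by
      intro a ha h
      have h2 := inner_trunc he p T (⟨a, ha⟩ : Fin (2 * N + 2))
      have hmemT : (⟨a, ha⟩ : Fin (2 * N + 2)) ∈ T :=
        Finset.mem_filter.mpr ⟨Finset.mem_univ _, h⟩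
      rw [if_pos hmemT] at h2
      exact h2
    have hqk : ∀ a : ℕ, a < 2 * N + 2 → a ≤ r → ⟪q, e a⟫ = ⟪p, e a⟫ := by
      intro a ha h
      have h2 := inner_trunc he p T (⟨a, ha⟩ : Fin (2 * N + 2))
      have hmemT : (⟨a, ha⟩ : Fin (2 * N + 2)) ∉ T := by
        simp only [hT, Finset.mem_filter, Finset.mem_univ, true_and, not_lt]
        exact h
      rw [if_neg hmemT] at h2
      exact h2
    obtain ⟨hpD0, hpDk⟩ := hp.1
    have hqmem : q ∈ Dset N e t := by
      refine ⟨?_, ?_⟩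
      · rw [hqk 0 (by omega) (by omega)]; exact hpD0
      · intro k hk
        have h1 : 2 * k + 1 < 2 * N + 2 := by omega
        have h2 : 2 * k + 2 < 2 * N + 2 := by omega
        by_cases hcase : 2 * k + 2 ≤ r
        · rw [hqk _ h1 (by omega), hqk _ h2 hcase]
          exact hpDk k hk
        · obtain ⟨c, hc⟩ := hre
          have hc1 : r < 2 * k + 1 := by omega
          rw [hq0 _ h1 hc1, hq0 _ h2 (by omega)]
          exact left_mem_segment ℝ _ _
    have hfin := proj_coords e he (Dset N e t) _ p r
      (fun i hi => key _ hxD i (lt_of_le_of_lt hmr hi)) hp hqmem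
    exact Submodule.span_mono (Set.image_mono (Set.Iic_subset_Iic.mpr hrm)) hfin
  · -- C part
    intro p hp
    have hxC : ((1 / (1 + γ * μ)) • (y - γ • u0)) ∈ Submodule.span ℝ (e '' Set.Iic m) :=
      Submodule.smul_mem _ _ (Submodule.sub_mem _ hy (Submodule.smul_mem _ _ hu0'))
    obtain ⟨r, hre, hmr, hrm⟩ : ∃ r, Odd r ∧ m ≤ r ∧ r ≤ m + 1 := by
      rcases Nat.even_or_odd m with h | h
      · exact ⟨m + 1, h.add_one, Nat.le_succ _, le_refl _⟩
      · exact ⟨m, h, le_refl _, Nat.le_succ _⟩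
    set T : Finset (Fin (2 * N + 2)) := Finset.univ.filter (fun i : Fin (2 * N + 2) => r < (i : ℕ))
      with hT
    set q : EuclideanSpace ℝ (Fin (2 * N + 2)) := p - ∑ i ∈ T, ⟪p, e (i : ℕ)⟫ • e (i : ℕ)
      with hqdef
    have hq0 : ∀ a : ℕ, a < 2 * N + 2 → r < a → ⟪q, e a⟫ = 0 := by
      intro a ha h
      have h2 := inner_trunc he p T (⟨a, ha⟩ : Fin (2 * N + 2))
      have hmemT : (⟨a, ha⟩ : Fin (2 * N + 2)) ∈ T :=
        Finset.mem_filter.mpr ⟨Finset.mem_univ _, h⟩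
      rw [if_pos hmemT] at h2
      exact h2
    have hqk : ∀ a : ℕ, a < 2 * N + 2 → a ≤ r → ⟪q, e a⟫ = ⟪p, e a⟫ := by
      intro a ha h
      have h2 := inner_trunc he p T (⟨a, ha⟩ : Fin (2 * N + 2))
      have hmemT : (⟨a, ha⟩ : Fin (2 * N + 2)) ∉ T := by
        simp only [hT, Finset.mem_filter, Finset.mem_univ, true_and, not_lt]
        exact h
      rw [if_neg hmemT] at h2
      exact h2
    obtain ⟨hr1, hrc⟩ : 1 ≤ r ∧ True := ⟨hre.pos, trivial⟩
    obtain ⟨hpC0, hpC1, hpCk⟩ := hp.1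
    have hqmem : q ∈ Cset N e t := by
      refine ⟨?_, ?_, ?_⟩
      · rw [hqk 0 (by omega) (by omega)]; exact hpC0
      · rw [hqk 1 (by omega) hr1]; exact hpC1
      · intro k hk1 hkN
        have h1 : 2 * k < 2 * N + 2 := by omega
        have h2 : 2 * k + 1 < 2 * N + 2 := by omega
        by_cases hcase : 2 * k + 1 ≤ r
        · rw [hqk _ h1 (by omega), hqk _ h2 hcase]
          exact hpCk k hk1 hkN
        · obtain ⟨c, hc⟩ := hre
          have hc1 : r < 2 * k := by omega
          rw [hq0 _ h1 hc1, hq0 _ h2 (by omega)]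
          exact left_mem_segment ℝ _ _
    have hfin := proj_coords e he (Cset N e t) _ p r
      (fun i hi => key _ hxC i (lt_of_le_of_lt hmr hi)) hp hqmem
    exact Submodule.span_mono (Set.image_mono (Set.Iic_subset_Iic.mpr hrm)) hfin
end
end

section
/- Fix N ∈ ℕ, μ > 0, x₀ ∈ ℝ^{2N+2}, u₀ ∈ span{e_{−1}}, and t = Σ_{i=0}^{2N} t_i e_i with all t_i > 0. With f(x) = −⟨u₀, x − x₀⟩ + δ_{x₀+D_t}(x) and g(x) = (μ/2)‖x − x₀‖² + ⟨u₀, x − x₀⟩ + δ_{x₀+C_t}(x), the intersection C_t ∩ D_t equals the singleton { y : y_{−1} = 0, y_i = t_i for 0 ≤ i ≤ 2N }, and x⋆ := x₀ + t is the unique minimizer of f + g. -/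
noncomputable section

open scoped RealInnerProductSpace
open Finset

variable {E : Type*} [NormedAddCommGroup E] [InnerProductSpace ℝ E]

open Classical in
lemma indE_cases (S : Set E) (x : E) : indE S x = 0 ∨ indE S x = ⊤ := by
  unfold indE; split <;> simp

lemma coe_add_indE_ne_bot (r : ℝ) (S : Set E) (x : E) :
    (r : EReal) + indE S x ≠ ⊥ := by
  rcases indE_cases S x with h | h <;> rw [h]
  · simp
  · rw [EReal.add_top_of_ne_bot (EReal.coe_ne_bot r)]; simp

/-- `C_t ∩ D_t` is the singleton of coordinate conditions, and
`x⋆ = x₀ + t` is the unique minimizer of `f + g`.  Coordinates use the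
convention that `e 0` is the paper's `e₋₁` and `e (i+1)` the paper's `eᵢ`. -/
theorem worst_case_unique_minimizer (N : ℕ) (μ : ℝ) (hμ : 0 < μ)
    (e : ℕ → EuclideanSpace ℝ (Fin (2 * N + 2)))
    (he : Orthonormal ℝ (fun i : Fin (2 * N + 2) => e i))
    (x0 u0 : EuclideanSpace ℝ (Fin (2 * N + 2)))
    (hu0 : u0 ∈ Submodule.span ℝ ({e 0} : Set (EuclideanSpace ℝ (Fin (2 * N + 2)))))
    (t : ℕ → ℝ) (ht : ∀ i ≤ 2 * N, 0 < t i)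
    (tv : EuclideanSpace ℝ (Fin (2 * N + 2)))
    (htv : tv = ∑ i ∈ Finset.range (2 * N + 1), t i • e (i + 1))
    (f g : EuclideanSpace ℝ (Fin (2 * N + 2)) → EReal)
    (hf : f = fun x => ((-(⟪u0, x - x0⟫) : ℝ) : EReal)
        + indE {z | z - x0 ∈ Dset N e t} x)
    (hg : g = fun x => (((μ / 2) * ‖x - x0‖ ^ 2 + ⟪u0, x - x0⟫ : ℝ) : EReal)
        + indE {z | z - x0 ∈ Cset N e t} x) :
    Cset N e t ∩ Dset N e t
        = {y | ⟪y, e 0⟫ = 0 ∧ ∀ i ≤ 2 * N, ⟪y, e (i + 1)⟫ = t i} ∧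
    (∀ z, f (x0 + tv) + g (x0 + tv) ≤ f z + g z) ∧
    (∀ z, (∀ v, f z + g z ≤ f v + g v) → z = x0 + tv) := by
    -- inner products of basis vectors
  have hEE : ∀ a b : ℕ, a < 2 * N + 2 → b < 2 * N + 2 →
      (⟪e a, e b⟫ : ℝ) = if a = b then 1 else 0 := by
    intro a b ha hb
    have h := orthonormal_iff_ite.mp he (⟨a, ha⟩ : Fin (2 * N + 2)) ⟨b, hb⟩
    simpa [Fin.mk.injEq] using h
  -- coordinates of tv
  have htv0 : (⟪tv, e 0⟫ : ℝ) = 0 := by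
    rw [htv, sum_inner]
    apply Finset.sum_eq_zero
    intro i hi
    rw [real_inner_smul_left, hEE (i + 1) 0 (by simp at hi; omega) (by omega)]
    simp
  have htvc : ∀ j ≤ 2 * N, (⟪tv, e (j + 1)⟫ : ℝ) = t j := by
    intro j hj
    rw [htv, sum_inner, Finset.sum_eq_single j]
    · rw [real_inner_smul_left, hEE (j + 1) (j + 1) (by omega) (by omega)]; simp
    · intro i hi hne
      rw [real_inner_smul_left, hEE (i + 1) (j + 1) (by simp at hi; omega) (by omega)]
      simp [hne]
    · intro h; exact absurd (Finset.mem_range.mpr (by omega)) h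
  -- the set equality
  have hset : Cset N e t ∩ Dset N e t
      = {y | ⟪y, e 0⟫ = 0 ∧ ∀ i ≤ 2 * N, ⟪y, e (i + 1)⟫ = t i} := by
    ext y
    constructor
    · rintro ⟨⟨hC0, hC1, hCk⟩, hD0, hDk⟩
      refine ⟨hC0, ?_⟩
      intro i
      induction i using Nat.strong_induction_on with
      | _ i ih =>
        intro hi
        rcases Nat.eq_zero_or_pos i with h0 | hpos
        · subst h0; simpa using hC1
        · rcases Nat.even_or_odd i with ⟨k, hk⟩ | ⟨k, hk⟩
          · -- even case, i = k + k with k ≥ 1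
            obtain ⟨m, rfl⟩ : ∃ m, k = m + 1 := ⟨k - 1, by omega⟩
            subst hk
            have hseg := hCk (m + 1) (by omega) (by omega)
            rw [show 2 * (m + 1) = 2 * m + 2 by ring] at hseg
            rw [show 2 * m + 2 - 1 = 2 * m + 1 by omega] at hseg
            obtain ⟨a, b, ha, hb, hab, heq⟩ := hseg
            have h1 := congrArg Prod.fst heq
            have h2 := congrArg Prod.snd heq
            simp only [Prod.fst_add, Prod.snd_add, Prod.smul_fst, Prod.smul_snd,
              smul_eq_mul, Prod.fst_zero, Prod.snd_zero, mul_zero, zero_add] at h1 h2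
            have hprev : (⟪y, e (2 * m + 2)⟫ : ℝ) = t (2 * m + 1) := by
              have := ih (2 * m + 1) (by omega) (by omega)
              rwa [show 2 * m + 1 + 1 = 2 * m + 2 by omega] at this
            rw [hprev] at h1
            have hb1 : b = 1 := by
              have htp := ht (2 * m + 1) (by omega)
              have : b * t (2 * m + 1) = 1 * t (2 * m + 1) := by rw [h1, one_mul]
              exact mul_right_cancel₀ (ne_of_gt htp) this
            rw [show m + 1 + (m + 1) = 2 * m + 2 by ring,
              show 2 * m + 2 + 1 = 2 * m + 3 by omega]
            rw [hb1, one_mul] at h2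
            rw [show 2 * m + 2 + 1 = 2 * m + 3 by omega] at h2
            exact h2.symm
          · -- odd case, i = 2 * k + 1
            subst hk
            have hseg := hDk k (by omega)
            obtain ⟨a, b, ha, hb, hab, heq⟩ := hseg
            have h1 := congrArg Prod.fst heq
            have h2 := congrArg Prod.snd heq
            simp only [Prod.fst_add, Prod.snd_add, Prod.smul_fst, Prod.smul_snd,
              smul_eq_mul, Prod.fst_zero, Prod.snd_zero, mul_zero, zero_add] at h1 h2
            have hprev : (⟪y, e (2 * k + 1)⟫ : ℝ) = t (2 * k) := by
              have := ih (2 * k) (by omega) (by omega)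
              rwa [show 2 * k + 1 = 2 * k + 1 by rfl] at this
            rw [hprev] at h1
            have hb1 : b = 1 := by
              have htp := ht (2 * k) (by omega)
              have : b * t (2 * k) = 1 * t (2 * k) := by rw [h1, one_mul]
              exact mul_right_cancel₀ (ne_of_gt htp) this
            rw [hb1, one_mul] at h2
            rw [show 2 * k + 1 + 1 = 2 * k + 2 by omega]
            exact h2.symm
    · rintro ⟨h0, hc⟩
      refine ⟨⟨h0, ?_, ?_⟩, h0, ?_⟩
      · have := hc 0 (by omega); simpa using this
      · intro k hk1 hkN
        have ha : (⟪y, e (2 * k)⟫ : ℝ) = t (2 * k - 1) := by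
          have := hc (2 * k - 1) (by omega)
          rwa [show 2 * k - 1 + 1 = 2 * k by omega] at this
        have hbb : (⟪y, e (2 * k + 1)⟫ : ℝ) = t (2 * k) := hc (2 * k) (by omega)
        rw [ha, hbb]
        exact right_mem_segment ℝ _ _
      · intro k hk
        have ha : (⟪y, e (2 * k + 1)⟫ : ℝ) = t (2 * k) := hc (2 * k) (by omega)
        have hbb : (⟪y, e (2 * k + 2)⟫ : ℝ) = t (2 * k + 1) := by
          have := hc (2 * k + 1) (by omega)
          rwa [show 2 * k + 1 + 1 = 2 * k + 2 by omega] at this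
        rw [ha, hbb]
        exact right_mem_segment ℝ _ _
  -- the basis spans
  have hspan : Submodule.span ℝ (Set.range fun i : Fin (2 * N + 2) => e i) = ⊤ := by
    apply Submodule.eq_top_of_finrank_eq
    rw [finrank_span_eq_card he.linearIndependent]
    simp [finrank_euclideanSpace_fin]
  -- uniqueness of the coordinate description
  have huniq : ∀ y : EuclideanSpace ℝ (Fin (2 * N + 2)),
      (⟪y, e 0⟫ : ℝ) = 0 → (∀ i ≤ 2 * N, (⟪y, e (i + 1)⟫ : ℝ) = t i) → y = tv := by
    intro y h0 hc
    have hz : ∀ v : EuclideanSpace ℝ (Fin (2 * N + 2)), (⟪v, y - tv⟫ : ℝ) = 0 := by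
      intro v
      have hv : v ∈ Submodule.span ℝ (Set.range fun i : Fin (2 * N + 2) => e i) := by
        rw [hspan]; trivial
      induction hv using Submodule.span_induction with
      | mem u hu =>
        obtain ⟨i, rfl⟩ := hu
        show (⟪e (i : ℕ), y - tv⟫ : ℝ) = 0
        rw [real_inner_comm, inner_sub_left]
        cases h : (i : ℕ) with
        | zero => rw [h0, htv0]; ring
        | succ m =>
          have hm : m ≤ 2 * N := by have := i.isLt; omega
          rw [hc m hm, htvc m hm]; ring
      | zero => exact inner_zero_left _
      | add u v _ _ ihu ihv => rw [inner_add_left, ihu, ihv]; ring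
      | smul a u _ ih => rw [real_inner_smul_left, ih]; ring
    have h00 : y - tv = 0 := by
      have := hz (y - tv)
      rwa [inner_self_eq_zero] at this
    exact sub_eq_zero.mp h00
  -- tv is in both sets
  have htvmem : tv ∈ Cset N e t ∩ Dset N e t := by
    rw [hset]; exact ⟨htv0, htvc⟩
  -- characterization of feasible points
  have hchar : ∀ x : EuclideanSpace ℝ (Fin (2 * N + 2)),
      (x - x0 ∈ Dset N e t ∧ x - x0 ∈ Cset N e t) ↔ x = x0 + tv := by
    intro x
    constructor
    · rintro ⟨hD, hC⟩
      have hmem : x - x0 ∈ Cset N e t ∩ Dset N e t := ⟨hC, hD⟩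
      rw [hset] at hmem
      have := huniq _ hmem.1 hmem.2
      rw [sub_eq_iff_eq_add'] at this
      exact this
    · rintro rfl
      rw [add_sub_cancel_left]
      exact ⟨htvmem.2, htvmem.1⟩
  -- the value at the minimizer
  have hDmem : (x0 + tv) ∈ {z : EuclideanSpace ℝ (Fin (2 * N + 2)) | z - x0 ∈ Dset N e t} := by
    show x0 + tv - x0 ∈ Dset N e t
    rw [add_sub_cancel_left]; exact htvmem.2
  have hCmem : (x0 + tv) ∈ {z : EuclideanSpace ℝ (Fin (2 * N + 2)) | z - x0 ∈ Cset N e t} := by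
    show x0 + tv - x0 ∈ Cset N e t
    rw [add_sub_cancel_left]; exact htvmem.1
  have hval_min : f (x0 + tv) + g (x0 + tv) = (((μ / 2) * ‖tv‖ ^ 2 : ℝ) : EReal) := by
    rw [hf, hg]
    simp only [indE, if_pos hDmem, if_pos hCmem, add_zero, add_sub_cancel_left]
    rw [← EReal.coe_add]
    norm_cast
    ring
  -- the value elsewhere is ⊤
  have hval_top : ∀ z, z ≠ x0 + tv → f z + g z = ⊤ := by
    intro z hz
    have hnot : ¬(z - x0 ∈ Dset N e t ∧ z - x0 ∈ Cset N e t) := fun h => hz ((hchar z).1 h)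
    rw [hf, hg]
    simp only []
    by_cases hD : z - x0 ∈ Dset N e t
    · have hC : z - x0 ∉ Cset N e t := fun hC => hnot ⟨hD, hC⟩
      have hCind : indE {w : EuclideanSpace ℝ (Fin (2 * N + 2)) | w - x0 ∈ Cset N e t} z = ⊤ := by
        simp only [indE, Set.mem_setOf_eq]; exact if_neg hC
      rw [hCind, EReal.add_top_of_ne_bot (EReal.coe_ne_bot _),
        EReal.add_top_of_ne_bot (coe_add_indE_ne_bot _ _ _)]
    · have hDind : indE {w : EuclideanSpace ℝ (Fin (2 * N + 2)) | w - x0 ∈ Dset N e t} z = ⊤ := by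
        simp only [indE, Set.mem_setOf_eq]; exact if_neg hD
      rw [hDind, EReal.add_top_of_ne_bot (EReal.coe_ne_bot _),
        EReal.top_add_of_ne_bot (coe_add_indE_ne_bot _ _ _)]
  refine ⟨hset, ?_, ?_⟩
  · intro z
    by_cases hz : z = x0 + tv
    · subst hz; exact le_rfl
    · rw [hval_top z hz]; exact le_top
  · intro z hmin
    by_contra hz
    have h1 := hmin (x0 + tv)
    rw [hval_top z hz, hval_min] at h1
    exact (EReal.coe_ne_top _) (top_le_iff.mp h1)
end
end

section
/- Fix N ∈ ℕ, μ > 0, x₀ ∈ ℝ^{2N+2}, u₀ ∈ span{e_{−1}}, and t = Σ_{i=0}^{2N} t_i e_i with all t_i > 0. Let x⋆ = x₀ + t and let g⋆ = Σ_{i=0}^{2N} g_i e_i. If g⋆ ∈ μt + N_{C_t}(t) and −g⋆ ∈ N_{D_t}(t), then with u⋆ := u₀ + g⋆ one has u⋆ ∈ ∂g(x⋆) and −u⋆ ∈ ∂f(x⋆). Moreover, the two normal-cone inclusions on g⋆ are equivalent to: (g_{2k+1} − μt_{2k+1}, g_{2k+2} − μt_{2k+2}) · (t_{2k+1}, t_{2k+2})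 ≥ 0 for k = 0,…,N−1; (g_{2k}, g_{2k+1}) · (t_{2k}, t_{2k+1}) ≤ 0 for k = 0,…,N−1; and g_{2N} = 0. -/
noncomputable section

open scoped RealInnerProductSpace
open Finset

variable {E : Type*} [NormedAddCommGroup E] [InnerProductSpace ℝ E]

theorem sum_split_odd' (F : ℕ → ℝ) (n : ℕ) :
    ∑ i ∈ range (2*n+1), F i = F 0 + ∑ k ∈ range n, (F (2*k+1) + F (2*k+2)) := by
  induction n with
  | zero => simp
  | succ n ih =>
    rw [show 2*(n+1)+1 = (2*n+1)+1+1 from by omega, Finset.sum_range_succ,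
      Finset.sum_range_succ, ih, Finset.sum_range_succ]
    ring

theorem sum_split_even' (F : ℕ → ℝ) (n : ℕ) :
    ∑ i ∈ range (2*n+1), F i = (∑ k ∈ range n, (F (2*k) + F (2*k+1))) + F (2*n) := by
  induction n with
  | zero => simp
  | succ n ih =>
    rw [show 2*(n+1)+1 = (2*n+1)+1+1 from by omega, Finset.sum_range_succ,
      Finset.sum_range_succ, ih, Finset.sum_range_succ, show 2*(n+1) = 2*n+2 from by omega]
    ring

theorem seg_iff' (p q : ℝ × ℝ) :
    q ∈ segment ℝ (0:ℝ×ℝ) p ↔ ∃ s : ℝ, 0 ≤ s ∧ s ≤ 1 ∧ q = s • p := by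
  constructor
  · rintro ⟨a, b, ha, hb, hab, h⟩
    exact ⟨b, hb, by linarith, by rw [← h]; simp⟩
  · rintro ⟨s, h0, h1, rfl⟩
    exact ⟨1 - s, s, by linarith, h0, by ring, by simp⟩

theorem keyg' (μ : ℝ) (hμ : 0 < μ) (u0 gv tv w : E)
    (h1 : ⟪gv - μ • tv, w - tv⟫ ≤ 0) :
    μ/2*‖tv‖^2 + ⟪u0, tv⟫ + ⟪u0 + gv, w - tv⟫ ≤ μ/2*‖w‖^2 + ⟪u0, w⟫ := by
  rw [inner_sub_left, real_inner_smul_left] at h1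
  rw [inner_add_left, inner_sub_right]
  have h4 : ⟪tv, w - tv⟫ = ⟪w, tv⟫ - ‖tv‖^2 := by
    rw [inner_sub_right, real_inner_self_eq_norm_sq, real_inner_comm]
  have h5 : ‖w - tv‖^2 = ‖w‖^2 - 2*⟪w, tv⟫ + ‖tv‖^2 := norm_sub_sq_real w tv
  have h6 : 0 ≤ μ/2 * ‖w - tv‖^2 := by positivity
  rw [h5] at h6
  have h7 : μ * ⟪tv, w - tv⟫ = μ * ⟪w, tv⟫ - μ * ‖tv‖^2 := by rw [h4]; ring
  nlinarith [h1, h6, h7]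

theorem keyf' (u0 gv tv w : E) (h1 : ⟪-gv, w - tv⟫ ≤ 0) :
    -⟪u0, tv⟫ + ⟪-(u0 + gv), w - tv⟫ ≤ -⟪u0, w⟫ := by
  rw [inner_neg_left] at h1
  rw [inner_neg_left, inner_add_left, inner_sub_right]
  linarith

set_option maxHeartbeats 2000000 in
/-- normal-cone conditions at the endpoint, Lemma 2 of the
lower-bound construction.  With `x⋆ = x₀ + t`, `g⋆ = Σ gᵢ eᵢ`: if
`g⋆ ∈ μt + N_{C_t}(t)` and `-g⋆ ∈ N_{D_t}(t)` then, with `u⋆ = u₀ + g⋆`,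
`u⋆ ∈ ∂g(x⋆)` and `-u⋆ ∈ ∂f(x⋆)`.  Moreover those inclusions are equivalent to
the blockwise inequalities together with `g_{2N} = 0`. -/
theorem normal_cone_conditions (N : ℕ) (μ : ℝ) (hμ : 0 < μ)
    (e : ℕ → EuclideanSpace ℝ (Fin (2 * N + 2)))
    (he : Orthonormal ℝ (fun i : Fin (2 * N + 2) => e i))
    (x0 u0 : EuclideanSpace ℝ (Fin (2 * N + 2)))
    (hu0 : u0 ∈ Submodule.span ℝ ({e 0} : Set (EuclideanSpace ℝ (Fin (2 * N + 2)))))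
    (t : ℕ → ℝ) (ht : ∀ i ≤ 2 * N, 0 < t i)
    (tv : EuclideanSpace ℝ (Fin (2 * N + 2)))
    (htv : tv = ∑ i ∈ Finset.range (2 * N + 1), t i • e (i + 1))
    (gs : ℕ → ℝ)
    (gv : EuclideanSpace ℝ (Fin (2 * N + 2)))
    (hgv : gv = ∑ i ∈ Finset.range (2 * N + 1), gs i • e (i + 1))
    (f g : EuclideanSpace ℝ (Fin (2 * N + 2)) → EReal)
    (hf : f = fun x => ((-(⟪u0, x - x0⟫) : ℝ) : EReal)
        + indE {z | z - x0 ∈ Dset N e t} x)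
    (hg : g = fun x => (((μ / 2) * ‖x - x0‖ ^ 2 + ⟪u0, x - x0⟫ : ℝ) : EReal)
        + indE {z | z - x0 ∈ Cset N e t} x) :
    ((gv - μ • tv ∈ NormalCone (Cset N e t) tv ∧
        -gv ∈ NormalCone (Dset N e t) tv) →
      (SubdiffAt g (x0 + tv) (u0 + gv) ∧ SubdiffAt f (x0 + tv) (-(u0 + gv)))) ∧
    ((gv - μ • tv ∈ NormalCone (Cset N e t) tv ∧
        -gv ∈ NormalCone (Dset N e t) tv) ↔
      ((∀ k < N,
          0 ≤ (gs (2 * k + 1) - μ * t (2 * k + 1)) * t (2 * k + 1)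
            + (gs (2 * k + 2) - μ * t (2 * k + 2)) * t (2 * k + 2)) ∧
       (∀ k < N,
          gs (2 * k) * t (2 * k) + gs (2 * k + 1) * t (2 * k + 1) ≤ 0) ∧
       gs (2 * N) = 0)) := by
  -- basic orthonormality facts
  have hee : ∀ i j : ℕ, i < 2*N+2 → j < 2*N+2 →
      ⟪e i, e j⟫ = if i = j then (1:ℝ) else 0 := by
    intro i j hi hj
    have := (orthonormal_iff_ite.mp he) ⟨i, hi⟩ ⟨j, hj⟩
    simpa [Fin.mk.injEq] using this
  have coord : ∀ (c : ℕ → ℝ) (i : ℕ), i ≤ 2*N →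
      ⟪∑ i' ∈ Finset.range (2*N+1), c i' • e (i'+1), e (i+1)⟫ = c i := by
    intro c i hi
    rw [sum_inner, Finset.sum_eq_single i]
    · rw [real_inner_smul_left, hee (i+1) (i+1) (by omega) (by omega)]
      simp
    · intro b hb hbi
      have hb' := Finset.mem_range.mp hb
      rw [real_inner_smul_left, hee (b+1) (i+1) (by omega) (by omega)]
      simp [hbi]
    · intro h
      exact absurd (Finset.mem_range.mpr (by omega)) h
  have coord0 : ∀ (c : ℕ → ℝ),
      ⟪∑ i' ∈ Finset.range (2*N+1), c i' • e (i'+1), e 0⟫ = 0 := by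
    intro c
    rw [sum_inner, Finset.sum_eq_zero]
    intro b hb
    have hb' := Finset.mem_range.mp hb
    rw [real_inner_smul_left, hee (b+1) 0 (by omega) (by omega)]
    simp
  have tvc : ∀ i ≤ 2*N, ⟪tv, e (i+1)⟫ = t i := by
    intro i hi; rw [htv]; exact coord t i hi
  have gvc : ∀ i ≤ 2*N, ⟪gv, e (i+1)⟫ = gs i := by
    intro i hi; rw [hgv]; exact coord gs i hi
  have tv0 : ⟪tv, e 0⟫ = 0 := by rw [htv]; exact coord0 t
  have tvc' : ∀ j, 1 ≤ j → j ≤ 2*N+1 → ⟪tv, e j⟫ = t (j-1) := by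
    intro j h1 h2
    obtain ⟨i, rfl⟩ := Nat.exists_eq_add_of_le h1
    rw [show 1+i = i+1 from by omega, tvc i (by omega), Nat.add_sub_cancel]
  have gvc' : ∀ j, 1 ≤ j → j ≤ 2*N+1 → ⟪gv, e j⟫ = gs (j-1) := by
    intro j h1 h2
    obtain ⟨i, rfl⟩ := Nat.exists_eq_add_of_le h1
    rw [show 1+i = i+1 from by omega, gvc i (by omega), Nat.add_sub_cancel]
  -- tv ∈ Cset, tv ∈ Dset
  have htvC : tv ∈ Cset N e t := by
    refine ⟨tv0, by rw [tvc' 1 (le_refl 1) (by omega)], ?_⟩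
    intro k hk1 hkN
    rw [tvc' (2*k) (by omega) (by omega), tvc' (2*k+1) (by omega) (by omega),
      Nat.add_sub_cancel]
    exact right_mem_segment ℝ _ _
  have htvD : tv ∈ Dset N e t := by
    refine ⟨tv0, ?_⟩
    intro k hk
    rw [tvc' (2*k+1) (by omega) (by omega), tvc' (2*k+2) (by omega) (by omega),
      Nat.add_sub_cancel, show 2*k+2-1 = 2*k+1 from by omega]
    exact right_mem_segment ℝ _ _
  have hx : (x0 + tv) - x0 = tv := by abel
  have partA : (gv - μ • tv ∈ NormalCone (Cset N e t) tv ∧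
      -gv ∈ NormalCone (Dset N e t) tv) →
      (SubdiffAt g (x0 + tv) (u0 + gv) ∧ SubdiffAt f (x0 + tv) (-(u0 + gv))) := by
    rintro ⟨hC, hD⟩
    constructor
    · intro y
      rw [hg]
      simp only [indE, Set.mem_setOf_eq, hx, htvC, if_pos]
      by_cases hy : y - x0 ∈ Cset N e t
      · rw [if_pos (show y ∈ {z | z - x0 ∈ Cset N e t} from hy), add_zero, add_zero, ← EReal.coe_add, EReal.coe_le_coe_iff]
        have hyx : y - (x0 + tv) = (y - x0) - tv := by abel
        rw [hyx]
        exact keyg' μ hμ u0 gv tv (y - x0) (hC _ hy)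
      · rw [if_neg (show y ∉ {z | z - x0 ∈ Cset N e t} from hy)]
        exact le_top.trans_eq (EReal.coe_add_top _).symm
    · intro y
      rw [hf]
      simp only [indE, Set.mem_setOf_eq, hx, htvD, if_pos]
      by_cases hy : y - x0 ∈ Dset N e t
      · rw [if_pos (show y ∈ {z | z - x0 ∈ Dset N e t} from hy), add_zero, add_zero, ← EReal.coe_add, EReal.coe_le_coe_iff]
        have hyx : y - (x0 + tv) = (y - x0) - tv := by abel
        rw [hyx]
        exact keyf' u0 gv tv (y - x0) (hD _ hy)
      · rw [if_neg (show y ∉ {z | z - x0 ∈ Dset N e t} from hy)]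
        exact le_top.trans_eq (EReal.coe_add_top _).symm
  -- forward direction of the iff
  have hvC : ∀ j, 1 ≤ j → j ≤ 2*N+1 → ⟪gv - μ • tv, e j⟫ = gs (j-1) - μ * t (j-1) := by
    intro j h1 h2
    rw [inner_sub_left, real_inner_smul_left, gvc' j h1 h2, tvc' j h1 h2]
  have fwd : (gv - μ • tv ∈ NormalCone (Cset N e t) tv ∧
      -gv ∈ NormalCone (Dset N e t) tv) →
      ((∀ k < N, 0 ≤ (gs (2*k+1) - μ * t (2*k+1)) * t (2*k+1)
          + (gs (2*k+2) - μ * t (2*k+2)) * t (2*k+2)) ∧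
       (∀ k < N, gs (2*k) * t (2*k) + gs (2*k+1) * t (2*k+1) ≤ 0) ∧
       gs (2*N) = 0) := by
    rintro ⟨hC, hD⟩
    refine ⟨?_, ?_, ?_⟩
    · intro k hk
      have hmem : tv - t (2*k+1) • e (2*k+2) - t (2*k+2) • e (2*k+3) ∈ Cset N e t := by
        have wc : ∀ j, j < 2*N+2 →
            ⟪tv - t (2*k+1) • e (2*k+2) - t (2*k+2) • e (2*k+3), e j⟫
            = ⟪tv, e j⟫ - (if 2*k+2 = j then t (2*k+1) else 0)
              - (if 2*k+3 = j then t (2*k+2) else 0) := by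
          intro j hj
          rw [inner_sub_left, inner_sub_left, real_inner_smul_left, real_inner_smul_left,
            hee (2*k+2) j (by omega) hj, hee (2*k+3) j (by omega) hj]
          split_ifs <;> ring
        refine ⟨?_, ?_, ?_⟩
        · rw [wc 0 (by omega), if_neg (by omega), if_neg (by omega), tv0]; ring
        · rw [wc 1 (by omega), if_neg (by omega), if_neg (by omega),
            tvc' 1 (le_refl 1) (by omega)]
          norm_num
        · intro k' h1 h2
          rw [wc (2*k') (by omega), wc (2*k'+1) (by omega)]
          by_cases hk' : k' = k+1
          · subst hk'
            rw [if_pos (by omega), if_neg (by omega), if_neg (by omega), if_pos (by omega),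
              tvc' (2*(k+1)) (by omega) (by omega), tvc' (2*(k+1)+1) (by omega) (by omega),
              Nat.add_sub_cancel, show 2*(k+1)-1 = 2*k+1 from by omega,
              show 2*(k+1) = 2*k+2 from by omega]
            simp only [sub_self, sub_zero]
            exact left_mem_segment ℝ (0:ℝ×ℝ) _
          · rw [if_neg (by omega), if_neg (by omega), if_neg (by omega), if_neg (by omega),
              sub_zero, sub_zero, sub_zero, sub_zero]
            exact htvC.2.2 k' h1 h2
      have key := hC _ hmem
      rw [show (tv - t (2*k+1) • e (2*k+2) - t (2*k+2) • e (2*k+3)) - tv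
          = -(t (2*k+1) • e (2*k+2)) + -(t (2*k+2) • e (2*k+3)) from by abel] at key
      rw [inner_add_right, inner_neg_right, inner_neg_right, real_inner_smul_right,
        real_inner_smul_right, hvC (2*k+2) (by omega) (by omega),
        hvC (2*k+3) (by omega) (by omega), show 2*k+2-1 = 2*k+1 from by omega,
        show 2*k+3-1 = 2*k+2 from by omega] at key
      nlinarith [key]
    · intro k hk
      have hmem : tv - t (2*k) • e (2*k+1) - t (2*k+1) • e (2*k+2) ∈ Dset N e t := by
        have wc : ∀ j, j < 2*N+2 →
            ⟪tv - t (2*k) • e (2*k+1) - t (2*k+1) • e (2*k+2), e j⟫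
            = ⟪tv, e j⟫ - (if 2*k+1 = j then t (2*k) else 0)
              - (if 2*k+2 = j then t (2*k+1) else 0) := by
          intro j hj
          rw [inner_sub_left, inner_sub_left, real_inner_smul_left, real_inner_smul_left,
            hee (2*k+1) j (by omega) hj, hee (2*k+2) j (by omega) hj]
          split_ifs <;> ring
        refine ⟨?_, ?_⟩
        · rw [wc 0 (by omega), if_neg (by omega), if_neg (by omega), tv0]; ring
        · intro k' h2
          rw [wc (2*k'+1) (by omega), wc (2*k'+2) (by omega)]
          by_cases hk' : k' = k
          · rw [hk']
            rw [if_pos rfl, if_neg (by omega), if_neg (by omega), if_pos rfl,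
              tvc' (2*k+1) (by omega) (by omega), tvc' (2*k+2) (by omega) (by omega),
              Nat.add_sub_cancel, show 2*k+2-1 = 2*k+1 from by omega]
            simp only [sub_self, sub_zero]
            exact left_mem_segment ℝ (0:ℝ×ℝ) _
          · rw [if_neg (by omega), if_neg (by omega), if_neg (by omega), if_neg (by omega),
              sub_zero, sub_zero, sub_zero, sub_zero]
            exact htvD.2 k' h2
      have key := hD _ hmem
      rw [show (tv - t (2*k) • e (2*k+1) - t (2*k+1) • e (2*k+2)) - tv
          = -(t (2*k) • e (2*k+1)) + -(t (2*k+1) • e (2*k+2)) from by abel] at key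
      rw [inner_add_right, inner_neg_right, inner_neg_right, real_inner_smul_right,
        real_inner_smul_right, inner_neg_left, inner_neg_left,
        gvc' (2*k+1) (by omega) (by omega), gvc' (2*k+2) (by omega) (by omega),
        Nat.add_sub_cancel, show 2*k+2-1 = 2*k+1 from by omega] at key
      nlinarith [key]
    · have hmem : tv - gs (2*N) • e (2*N+1) ∈ Dset N e t := by
        have wc : ∀ j, j < 2*N+2 →
            ⟪tv - gs (2*N) • e (2*N+1), e j⟫
            = ⟪tv, e j⟫ - (if 2*N+1 = j then gs (2*N) else 0) := by
          intro j hj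
          rw [inner_sub_left, real_inner_smul_left, hee (2*N+1) j (by omega) hj]
          split_ifs <;> ring
        refine ⟨?_, ?_⟩
        · rw [wc 0 (by omega), if_neg (by omega), tv0]; ring
        · intro k' h2
          rw [wc (2*k'+1) (by omega), wc (2*k'+2) (by omega),
            if_neg (by omega), if_neg (by omega), sub_zero, sub_zero]
          exact htvD.2 k' h2
      have key := hD _ hmem
      rw [show (tv - gs (2*N) • e (2*N+1)) - tv = -(gs (2*N) • e (2*N+1)) from by abel,
        inner_neg_right, real_inner_smul_right, inner_neg_left,
        gvc' (2*N+1) (by omega) (by omega), Nat.add_sub_cancel] at key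
      nlinarith [key, sq_nonneg (gs (2*N))]
  have rev : ((∀ k < N, 0 ≤ (gs (2*k+1) - μ * t (2*k+1)) * t (2*k+1)
          + (gs (2*k+2) - μ * t (2*k+2)) * t (2*k+2)) ∧
       (∀ k < N, gs (2*k) * t (2*k) + gs (2*k+1) * t (2*k+1) ≤ 0) ∧
       gs (2*N) = 0) →
      (gv - μ • tv ∈ NormalCone (Cset N e t) tv ∧
        -gv ∈ NormalCone (Dset N e t) tv) := by
    rintro ⟨h1, h2, h3⟩
    constructor
    · intro w hw
      obtain ⟨hw0, hw1, hwp⟩ := hw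
      have hv : gv - μ • tv = ∑ i ∈ Finset.range (2*N+1), (gs i - μ * t i) • e (i+1) := by
        rw [hgv, htv, Finset.smul_sum, ← Finset.sum_sub_distrib]
        exact Finset.sum_congr rfl fun i _ => by rw [smul_smul, ← sub_smul]
      have hsum : ⟪gv - μ • tv, w - tv⟫
          = ∑ i ∈ Finset.range (2*N+1), (gs i - μ * t i) * (⟪w, e (i+1)⟫ - t i) := by
        rw [hv, sum_inner]
        refine Finset.sum_congr rfl fun i hi => ?_
        rw [real_inner_smul_left, inner_sub_right, real_inner_comm w (e (i+1)),
          real_inner_comm tv (e (i+1)), tvc i (by have := Finset.mem_range.mp hi; omega)]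
      have step : ∑ i ∈ Finset.range (2*N+1), (gs i - μ * t i) * (⟪w, e (i+1)⟫ - t i)
          = (gs 0 - μ * t 0) * (⟪w, e (0+1)⟫ - t 0)
            + ∑ k ∈ Finset.range N,
              ((gs (2*k+1) - μ * t (2*k+1)) * (⟪w, e (2*k+1+1)⟫ - t (2*k+1))
              + (gs (2*k+2) - μ * t (2*k+2)) * (⟪w, e (2*k+2+1)⟫ - t (2*k+2))) :=
        sum_split_odd' _ N
      have hz : (gs 0 - μ * t 0) * (⟪w, e (0+1)⟫ - t 0) = 0 := by
        rw [show (0:ℕ)+1 = 1 from rfl, hw1]; ring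
      rw [hsum, step, hz, zero_add]
      refine Finset.sum_nonpos fun k hk => ?_
      have hk' := Finset.mem_range.mp hk
      have hseg := (seg_iff' _ _).mp (hwp (k+1) (by omega) (by omega))
      obtain ⟨s, hs0, hs1, hseq⟩ := hseg
      simp only [Prod.smul_mk, smul_eq_mul, Prod.mk.injEq] at hseq
      obtain ⟨hA, hB⟩ := hseq
      have hA' : ⟪w, e (2*k+1+1)⟫ = s * t (2*k+1) := by
        rw [show 2*k+1+1 = 2*(k+1) from by omega, hA, show 2*(k+1)-1 = 2*k+1 from by omega]
      have hB' : ⟪w, e (2*k+2+1)⟫ = s * t (2*k+2) := by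
        rw [show 2*k+2+1 = 2*(k+1)+1 from by omega, hB, show 2*(k+1) = 2*k+2 from by omega]
      rw [hA', hB']
      nlinarith [h1 k hk', mul_nonneg (sub_nonneg.mpr hs1) (h1 k hk')]
    · intro w hw
      obtain ⟨hw0, hwp⟩ := hw
      have hv : -gv = ∑ i ∈ Finset.range (2*N+1), (-gs i) • e (i+1) := by
        rw [hgv, ← Finset.sum_neg_distrib]
        exact Finset.sum_congr rfl fun i _ => (neg_smul _ _).symm
      have hsum : ⟪-gv, w - tv⟫
          = ∑ i ∈ Finset.range (2*N+1), (-gs i) * (⟪w, e (i+1)⟫ - t i) := by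
        rw [hv, sum_inner]
        refine Finset.sum_congr rfl fun i hi => ?_
        rw [real_inner_smul_left, inner_sub_right, real_inner_comm w (e (i+1)),
          real_inner_comm tv (e (i+1)), tvc i (by have := Finset.mem_range.mp hi; omega)]
      have step : ∑ i ∈ Finset.range (2*N+1), (-gs i) * (⟪w, e (i+1)⟫ - t i)
          = (∑ k ∈ Finset.range N,
              ((-gs (2*k)) * (⟪w, e (2*k+1)⟫ - t (2*k))
              + (-gs (2*k+1)) * (⟪w, e (2*k+1+1)⟫ - t (2*k+1))))
            + (-gs (2*N)) * (⟪w, e (2*N+1)⟫ - t (2*N)) :=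
        sum_split_even' _ N
      have hz : (-gs (2*N)) * (⟪w, e (2*N+1)⟫ - t (2*N)) = 0 := by rw [h3]; ring
      rw [hsum, step, hz, add_zero]
      refine Finset.sum_nonpos fun k hk => ?_
      have hk' := Finset.mem_range.mp hk
      obtain ⟨s, hs0, hs1, hseq⟩ := (seg_iff' _ _).mp (hwp k hk')
      simp only [Prod.smul_mk, smul_eq_mul, Prod.mk.injEq] at hseq
      obtain ⟨hA, hB⟩ := hseq
      rw [hA, hB]
      nlinarith [h2 k hk', mul_nonneg (sub_nonneg.mpr hs1) (neg_nonneg.mpr (h2 k hk'))]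
  exact ⟨partA, ⟨fwd, rev⟩⟩
end
end

section
/- Fix N ∈ ℕ and μ > 0. Define t⋆_{2k} = sqrt( μ / ((1+2Nμ)(1+2kμ)(1+(2k+1)μ)) ) and t⋆_{2k+1} = sqrt( μ / ((1+2Nμ)(1+(2k+1)μ)(1+(2k+2)μ)) ) for k = 0,…,N−1, t⋆_{2N} = 1/(1+2Nμ), and g⋆_{2k} = −(1+2kμ) t⋆_{2k}, g⋆_{2k+1} = (1+(2k+2)μ) t⋆_{2k+1} for k = 0,…,N−1, g⋆_{2N} = 0. Then: (i) Σ_{i=0}^{2N} (t⋆_i)² + Σ_{i=0}^{2N} (g⋆_i)² = 1; (ii) (g⋆_{2k+1} − μt⋆_{2k+1}, g⋆_{2k+2} − μt⋆_{2k+2}) · (t⋆_{2k+1}, t⋆_{2k+2}) = 0 for k = 0,…,N−1 (with the index pair (2N−1, 2N) for k = N−1); and (iii) (g⋆_{2k}, g⋆_{2k+1}) · (t⋆_{2k}, t⋆_{2k+1}) = 0 for k = 0,…,N−1. -/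
noncomputable section

open scoped RealInnerProductSpace
open Finset

variable {E : Type*} [NormedAddCommGroup E] [InnerProductSpace ℝ E]

lemma pair_sum (f : ℕ → ℝ) : ∀ n : ℕ,
    ∑ i ∈ Finset.range (2 * n), f i
      = ∑ k ∈ Finset.range n, (f (2 * k) + f (2 * k + 1))
  | 0 => by simp
  | n + 1 => by
    have h : 2 * (n + 1) = 2 * n + 1 + 1 := by ring
    rw [h, Finset.sum_range_succ, Finset.sum_range_succ, pair_sum f n,
      Finset.sum_range_succ]
    ring


/-- the coefficients of the worst-case instance satisfy all
blockwise conditions with equality, under unit normalization. -/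
theorem worst_case_coefficients (N : ℕ) (μ : ℝ) (hμ : 0 < μ)
    (ts gs : ℕ → ℝ)
    (hts0 : ∀ k < N, ts (2 * k)
      = Real.sqrt (μ / ((1 + 2 * (N : ℝ) * μ) * (1 + 2 * (k : ℝ) * μ)
          * (1 + (2 * (k : ℝ) + 1) * μ))))
    (hts1 : ∀ k < N, ts (2 * k + 1)
      = Real.sqrt (μ / ((1 + 2 * (N : ℝ) * μ) * (1 + (2 * (k : ℝ) + 1) * μ)
          * (1 + (2 * (k : ℝ) + 2) * μ))))
    (hts2 : ts (2 * N) = 1 / (1 + 2 * (N : ℝ) * μ))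
    (hgs0 : ∀ k < N, gs (2 * k) = -(1 + 2 * (k : ℝ) * μ) * ts (2 * k))
    (hgs1 : ∀ k < N, gs (2 * k + 1) = (1 + (2 * (k : ℝ) + 2) * μ) * ts (2 * k + 1))
    (hgs2 : gs (2 * N) = 0) :
    (∑ i ∈ Finset.range (2 * N + 1), ts i ^ 2)
        + (∑ i ∈ Finset.range (2 * N + 1), gs i ^ 2) = 1 ∧
    (∀ k < N,
      (gs (2 * k + 1) - μ * ts (2 * k + 1)) * ts (2 * k + 1)
        + (gs (2 * k + 2) - μ * ts (2 * k + 2)) * ts (2 * k + 2) = 0) ∧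
    (∀ k < N,
      gs (2 * k) * ts (2 * k) + gs (2 * k + 1) * ts (2 * k + 1) = 0) := by
  have hD : (0:ℝ) < 1 + 2 * (N:ℝ) * μ := by positivity
  have hDne : (1 + 2 * (N:ℝ) * μ) ≠ 0 := ne_of_gt hD
  have hposa : ∀ k : ℕ, (0:ℝ) < 1 + 2 * (k:ℝ) * μ := fun k => by positivity
  have hposb : ∀ k : ℕ, (0:ℝ) < 1 + (2 * (k:ℝ) + 1) * μ := fun k => by positivity
  have hposc : ∀ k : ℕ, (0:ℝ) < 1 + (2 * (k:ℝ) + 2) * μ := fun k => by positivity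
  have ht0sq : ∀ k < N, ts (2 * k) ^ 2
      = μ / ((1 + 2 * (N:ℝ) * μ) * (1 + 2 * (k:ℝ) * μ) * (1 + (2 * (k:ℝ) + 1) * μ)) := by
    intro k hk
    rw [hts0 k hk, Real.sq_sqrt]
    have := hposa k; have := hposb k
    positivity
  have ht1sq : ∀ k < N, ts (2 * k + 1) ^ 2
      = μ / ((1 + 2 * (N:ℝ) * μ) * (1 + (2 * (k:ℝ) + 1) * μ) * (1 + (2 * (k:ℝ) + 2) * μ)) := by
    intro k hk
    rw [hts1 k hk, Real.sq_sqrt]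
    have := hposb k; have := hposc k
    positivity
  refine ⟨?_, ?_, ?_⟩
  · -- part (i)
    have hsum : (∑ i ∈ Finset.range (2 * N + 1), ts i ^ 2)
        + (∑ i ∈ Finset.range (2 * N + 1), gs i ^ 2)
        = (∑ i ∈ Finset.range (2 * N), (ts i ^ 2 + gs i ^ 2))
          + (ts (2 * N) ^ 2 + gs (2 * N) ^ 2) := by
      rw [Finset.sum_range_succ, Finset.sum_range_succ, Finset.sum_add_distrib]
      ring
    rw [hsum, pair_sum (fun i => ts i ^ 2 + gs i ^ 2) N]
    set F : ℕ → ℝ := fun j => 1 / ((1 + 2 * (N:ℝ) * μ) * (1 + 2 * (j:ℝ) * μ)) with hF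
    have hterm : ∀ k ∈ Finset.range N,
        ((fun i => ts i ^ 2 + gs i ^ 2) (2 * k) + (fun i => ts i ^ 2 + gs i ^ 2) (2 * k + 1))
        = (F k - F (k + 1)) + 2 * μ / (1 + 2 * (N:ℝ) * μ) := by
      intro k hk
      rw [Finset.mem_range] at hk
      simp only [hF]
      push_cast
      rw [hgs0 k hk, hgs1 k hk, mul_pow, mul_pow, ht0sq k hk, ht1sq k hk]
      have ha := ne_of_gt (hposa k); have hb := ne_of_gt (hposb k)
      have hc := ne_of_gt (hposc k)
      have hc' : (1 + 2 * ((k:ℝ) + 1) * μ) ≠ 0 := by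
        have : (1 + 2 * ((k:ℝ) + 1) * μ) = 1 + (2 * (k:ℝ) + 2) * μ := by ring
        rw [this]; exact hc
      field_simp
      ring
    rw [Finset.sum_congr rfl hterm, Finset.sum_add_distrib,
      Finset.sum_range_sub' F, Finset.sum_const, hts2, hgs2]
    simp only [hF, nsmul_eq_mul, Finset.card_range]
    push_cast
    field_simp
    ring
  · -- part (ii)
    intro k hk
    rw [hgs1 k hk]
    have h1 := ht1sq k hk
    rcases eq_or_lt_of_le (Nat.succ_le_of_lt hk) with hkN | hkN
    · -- k + 1 = N
      have hidx : 2 * k + 2 = 2 * N := by omega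
      have hcast : (N:ℝ) = (k:ℝ) + 1 := by exact_mod_cast congrArg Nat.cast hkN.symm
      rw [hidx, hts2, hgs2]
      have e1 : (1 + (2 * (k:ℝ) + 2) * μ) * ts (2 * k + 1) * ts (2 * k + 1)
          - μ * ts (2 * k + 1) * ts (2 * k + 1)
          = (1 + (2 * (k:ℝ) + 1) * μ) * ts (2 * k + 1) ^ 2 := by ring
      have goal' : ((1 + (2 * (k:ℝ) + 2) * μ) * ts (2*k+1) - μ * ts (2*k+1)) * ts (2*k+1)
          + (0 - μ * (1 / (1 + 2 * (N:ℝ) * μ))) * (1 / (1 + 2 * (N:ℝ) * μ))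
          = (1 + (2 * (k:ℝ) + 1) * μ) * ts (2*k+1) ^ 2
            - μ / (1 + 2 * (N:ℝ) * μ) ^ 2 := by
        field_simp; ring
      rw [goal', h1, hcast]
      have hb := ne_of_gt (hposb k)
      have hD' : (1 + 2 * ((k:ℝ) + 1) * μ) ≠ 0 := by
        have : (1 + 2 * ((k:ℝ)+1) * μ) = 1 + (2 * (k:ℝ) + 2) * μ := by ring
        rw [this]; exact ne_of_gt (hposc k)
      field_simp
      ring
    · -- k + 1 < N
      have hk1 : k + 1 < N := hkN
      have hidx : 2 * k + 2 = 2 * (k + 1) := by omega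
      rw [hidx, hgs0 (k+1) hk1]
      have h0 := ht0sq (k+1) hk1
      push_cast at h0 hgs0 ⊢
      rw [show (-(1 + 2 * ((k:ℝ) + 1) * μ) * ts (2 * (k + 1)) - μ * ts (2 * (k + 1)))
            * ts (2 * (k + 1))
          = -(1 + (2 * (k:ℝ) + 3) * μ) * ts (2 * (k+1)) ^ 2 from by ring,
        show ((1 + (2 * (k:ℝ) + 2) * μ) * ts (2*k+1) - μ * ts (2*k+1)) * ts (2*k+1)
          = (1 + (2 * (k:ℝ) + 1) * μ) * ts (2*k+1) ^ 2 from by ring,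
        h0, h1]
      have hb := ne_of_gt (hposb k); have hc := ne_of_gt (hposc k)
      have ha1 : (1 + 2 * ((k:ℝ) + 1) * μ) ≠ 0 := by
        have : (1 + 2 * ((k:ℝ)+1) * μ) = 1 + (2 * (k:ℝ) + 2) * μ := by ring
        rw [this]; exact hc
      have hb1 : (1 + (2 * ((k:ℝ) + 1) + 1) * μ) ≠ 0 := by
        have := hposb (k+1); push_cast at this; exact ne_of_gt this
      field_simp
      ring
  · -- part (iii)
    intro k hk
    rw [hgs0 k hk, hgs1 k hk,
      show -(1 + 2 * (k:ℝ) * μ) * ts (2*k) * ts (2*k)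
          + (1 + (2 * (k:ℝ) + 2) * μ) * ts (2*k+1) * ts (2*k+1)
        = -(1 + 2 * (k:ℝ) * μ) * ts (2*k) ^ 2
          + (1 + (2 * (k:ℝ) + 2) * μ) * ts (2*k+1) ^ 2 from by ring,
      ht0sq k hk, ht1sq k hk]
    have ha := ne_of_gt (hposa k); have hb := ne_of_gt (hposb k)
    have hc := ne_of_gt (hposc k)
    field_simp
    ring
end
end

section
/- Let U ∈ ℝ^{d'×d} have orthonormal columns with d' ≥ d, let x₀, u₀ ∈ ℝ^{d'}, and let P = I − UUᵀ. If g : ℝ^d → ℝ ∪ {∞} is closed, proper, and μ-strongly convex, then the function g_U : ℝ^{d'} → ℝ ∪ {∞} defined by g_U(x) = g(Uᵀ(x − x₀)) + ⟨u₀, x − x₀⟩ + (μ/2)‖P(x − x₀)‖² is μ-strongly convex (i.e., for every x, y and every v ∈ ∂g_U(x), g_U(y) ≥ g_U(x) + ⟨v, y − x⟩ + (μ/2)‖y − x‖²). -/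
noncomputable section

open scoped RealInnerProductSpace
open Finset

variable {E : Type*} [NormedAddCommGroup E] [InnerProductSpace ℝ E]

/-- The lifted function `f_U(x) = f(Uᵀ(x - x₀)) - ⟨u₀, x - x₀⟩`, where the
linear isometry `U` plays the role of the matrix with orthonormal columns and
`Uᵀ` is its adjoint. -/
def liftF {d d' : ℕ} (U : EuclideanSpace ℝ (Fin d) →ₗ[ℝ] EuclideanSpace ℝ (Fin d'))
    (x0 u0 : EuclideanSpace ℝ (Fin d'))
    (f : EuclideanSpace ℝ (Fin d) → EReal) :
    EuclideanSpace ℝ (Fin d') → EReal :=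
  fun x => f (LinearMap.adjoint U (x - x0)) - ((⟪u0, x - x0⟫ : ℝ) : EReal)

/-- The lifted function
`g_U(x) = g(Uᵀ(x - x₀)) + ⟨u₀, x - x₀⟩ + (μ/2)‖P(x - x₀)‖²`, where
`P = I - UUᵀ`. -/
def liftG {d d' : ℕ} (U : EuclideanSpace ℝ (Fin d) →ₗ[ℝ] EuclideanSpace ℝ (Fin d'))
    (x0 u0 : EuclideanSpace ℝ (Fin d')) (μ : ℝ)
    (g : EuclideanSpace ℝ (Fin d) → EReal) :
    EuclideanSpace ℝ (Fin d') → EReal :=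
  fun x => g (LinearMap.adjoint U (x - x0))
    + ((⟪u0, x - x0⟫
        + (μ / 2) * ‖(x - x0) - U (LinearMap.adjoint U (x - x0))‖ ^ 2 : ℝ) : EReal)


section MyAux

variable {E : Type*} [NormedAddCommGroup E] [InnerProductSpace ℝ E]

lemma my_norm_combo_sq (x y : E) (t : ℝ) :
    ‖(1 - t) • x + t • y‖ ^ 2
      = (1 - t) * ‖x‖ ^ 2 + t * ‖y‖ ^ 2 - t * (1 - t) * ‖y - x‖ ^ 2 := by
  simp only [← real_inner_self_eq_norm_sq, inner_add_left, inner_add_right,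
    inner_sub_left, inner_sub_right, real_inner_smul_left, real_inner_smul_right]
  ring

lemma my_coe_mul_ne_bot {b : ℝ} (hb : 0 < b) {X : EReal} (hX : X ≠ ⊥) :
    (b : EReal) * X ≠ ⊥ := by
  induction X using EReal.rec with
  | bot => exact absurd rfl hX
  | coe r => rw [← EReal.coe_mul]; exact EReal.coe_ne_bot _
  | top => rw [mul_comm, EReal.top_mul_of_pos (by exact_mod_cast hb)]; simp

lemma my_sub_add_cancel (X : EReal) (r : ℝ) : X - (r : EReal) + (r : EReal) = X := by
  rw [sub_eq_add_neg, ← EReal.coe_neg, add_assoc, ← EReal.coe_add,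
    show (-r + r : ℝ) = 0 by ring, EReal.coe_zero, add_zero]

lemma my_sub_coe_ne_bot {X : EReal} (hX : X ≠ ⊥) (r : ℝ) : X - (r : EReal) ≠ ⊥ := by
  rw [sub_eq_add_neg, ← EReal.coe_neg]
  simp [EReal.add_eq_bot_iff, hX]

lemma my_add_coe_ne_bot {X : EReal} (hX : X ≠ ⊥) (r : ℝ) : X + (r : EReal) ≠ ⊥ := by
  simp [EReal.add_eq_bot_iff, hX]

lemma my_add_coe_sub_coe (X : EReal) (p q r s : ℝ) (h : p - q = r - s) :
    X + (p : EReal) - (q : EReal) = (X - (s : EReal)) + (r : EReal) := by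
  rw [sub_eq_add_neg, sub_eq_add_neg, ← EReal.coe_neg, ← EReal.coe_neg,
    add_assoc, add_assoc, ← EReal.coe_add, ← EReal.coe_add]
  congr 1
  exact_mod_cast by linarith

lemma my_subdiff_strong {G : E → EReal} {μ : ℝ} (hμ : 0 ≤ μ)
    (hbot : ∀ z, G z ≠ ⊥) (hsc : StrongConvexFn μ G)
    (x y v : E) (hv : SubdiffAt G x v) :
    G x + ((⟪v, y - x⟫ + (μ / 2) * ‖y - x‖ ^ 2 : ℝ) : EReal) ≤ G y := by
  rcases eq_or_ne (G y) ⊤ with hy | hy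
  · rw [hy]; exact le_top
  rcases eq_or_ne (G x) ⊤ with hx | hx
  · exfalso
    apply hy
    have h1 := hv y
    rw [hx, EReal.top_add_of_ne_bot (EReal.coe_ne_bot _)] at h1
    exact top_le_iff.mp h1
  obtain ⟨A, hA⟩ : ∃ A : ℝ, G x = A := ⟨(G x).toReal, (EReal.coe_toReal hx (hbot x)).symm⟩
  obtain ⟨B, hB⟩ : ∃ B : ℝ, G y = B := ⟨(G y).toReal, (EReal.coe_toReal hy (hbot y)).symm⟩
  set I := (⟪v, y - x⟫ : ℝ) with hI
  set N := ‖y - x‖ ^ 2 with hN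
  have hN0 : 0 ≤ N := by positivity
  have key : ∀ t : ℝ, 0 < t → t < 1 → I + μ / 2 * (1 - t) * N ≤ B - A := by
    intro t ht0 ht1
    set z := (1 - t) • x + t • y with hz
    have hconv := hsc x y (1 - t) t (by linarith) (by linarith) (by ring)
    simp only [hA, hB] at hconv
    rw [← EReal.coe_sub, ← EReal.coe_sub, ← EReal.coe_mul, ← EReal.coe_mul,
      ← EReal.coe_add] at hconv
    have hGz : G z ≤ (((1 - t) * (A - μ / 2 * ‖x‖ ^ 2) + t * (B - μ / 2 * ‖y‖ ^ 2)
        + μ / 2 * ‖z‖ ^ 2 : ℝ) : EReal) := by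
      have h2 := add_le_add_left hconv ((μ / 2 * ‖z‖ ^ 2 : ℝ) : EReal)
      rwa [my_sub_add_cancel, ← EReal.coe_add] at h2
    have hsub := hv z
    have hzx : z - x = t • (y - x) := by
      rw [hz, sub_smul, one_smul, smul_sub]; abel
    rw [hA, hzx, real_inner_smul_right, ← hI, ← EReal.coe_add] at hsub
    have hreal := EReal.coe_le_coe_iff.mp (hsub.trans hGz)
    have hzn : ‖z‖ ^ 2 = (1 - t) * ‖x‖ ^ 2 + t * ‖y‖ ^ 2 - t * (1 - t) * N :=
      my_norm_combo_sq x y t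
    rw [hzn] at hreal
    have h2 : t * (I + μ / 2 * (1 - t) * N) ≤ t * (B - A) := by nlinarith [hreal]
    exact (mul_le_mul_iff_right₀ ht0).mp h2
  rw [hA, hB, ← EReal.coe_add, EReal.coe_le_coe_iff]
  have hfin : ∀ ε > (0:ℝ), A + (I + μ / 2 * N) ≤ B + ε := by
    intro ε hε
    have hd : 0 < μ * N + 1 := by nlinarith
    set t := min (1/2 : ℝ) (2 * ε / (μ * N + 1)) with htdef
    have ht0 : 0 < t := lt_min (by norm_num) (by positivity)
    have ht1 : t < 1 := lt_of_le_of_lt (min_le_left _ _) (by norm_num)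
    have hk := key t ht0 ht1
    have htle : t * (μ * N + 1) ≤ 2 * ε := by
      have h3 := min_le_right (1/2 : ℝ) (2 * ε / (μ * N + 1))
      calc t * (μ * N + 1) ≤ (2 * ε / (μ * N + 1)) * (μ * N + 1) :=
            mul_le_mul_of_nonneg_right h3 hd.le
        _ = 2 * ε := by field_simp
    nlinarith [ht0.le]
  exact le_of_forall_pos_le_add hfin

end MyAux

/-- the lifted function `g_U` is `μ`-strongly convex.
The conclusion is stated both as the definition (`g_U - (μ/2)‖·‖²` convex) and
in the equivalent subgradient form: for every `x, y` and `v ∈ ∂g_U(x)`,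
`g_U(y) ≥ g_U(x) + ⟨v, y - x⟩ + (μ/2)‖y - x‖²`. -/
theorem liftG_strongly_convex {d d' : ℕ} (hd : d ≤ d')
    (U : EuclideanSpace ℝ (Fin d) →ₗ[ℝ] EuclideanSpace ℝ (Fin d'))
    (hU : ∀ x y : EuclideanSpace ℝ (Fin d), ⟪U x, U y⟫ = ⟪x, y⟫)
    (x0 u0 : EuclideanSpace ℝ (Fin d')) (μ : ℝ) (hμ : 0 < μ)
    (g : EuclideanSpace ℝ (Fin d) → EReal)
    (hgcl : ClosedFn g) (hgpr : ProperFn g) (hgsc : StrongConvexFn μ g) :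
    StrongConvexFn μ (liftG U x0 u0 μ g) ∧
    (∀ x y v, SubdiffAt (liftG U x0 u0 μ g) x v →
      liftG U x0 u0 μ g x + ((⟪v, y - x⟫ + (μ / 2) * ‖y - x‖ ^ 2 : ℝ) : EReal)
        ≤ liftG U x0 u0 μ g y) := by
  have hbot : ∀ z, liftG U x0 u0 μ g z ≠ ⊥ := by
    intro z
    simp only [liftG]
    exact my_add_coe_ne_bot (hgpr.1 _) _
  have hPnorm : ∀ x : EuclideanSpace ℝ (Fin d'),
      ‖(x - x0) - U (LinearMap.adjoint U (x - x0))‖ ^ 2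
        = ‖x - x0‖ ^ 2 - ‖LinearMap.adjoint U (x - x0)‖ ^ 2 := by
    intro x
    set z := x - x0 with hzdef
    set w := LinearMap.adjoint U z with hwdef
    have h1 : (⟪z, U w⟫ : ℝ) = ‖w‖ ^ 2 := by
      rw [← LinearMap.adjoint_inner_left U w z, ← hwdef]
      exact real_inner_self_eq_norm_sq w
    have h2 : ‖U w‖ ^ 2 = ‖w‖ ^ 2 := by
      rw [← real_inner_self_eq_norm_sq, ← real_inner_self_eq_norm_sq, hU]
    rw [norm_sub_sq_real, h1, h2]
    ring
  have hrw : ∀ x : EuclideanSpace ℝ (Fin d'),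
      liftG U x0 u0 μ g x - (((μ / 2) * ‖x‖ ^ 2 : ℝ) : EReal)
        = (g (LinearMap.adjoint U (x - x0))
            - (((μ / 2) * ‖LinearMap.adjoint U (x - x0)‖ ^ 2 : ℝ) : EReal))
          + ((⟪u0, x - x0⟫ + μ / 2 * ‖x - x0‖ ^ 2 - μ / 2 * ‖x‖ ^ 2 : ℝ) : EReal) := by
    intro x
    simp only [liftG]
    rw [hPnorm x]
    exact my_add_coe_sub_coe _ _ _ _ _ (by ring)
  have hcform : ∀ z : EuclideanSpace ℝ (Fin d'),
      (⟪u0, z - x0⟫ + μ / 2 * ‖z - x0‖ ^ 2 - μ / 2 * ‖z‖ ^ 2 : ℝ)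
        = ⟪u0 - μ • x0, z⟫ + (μ / 2 * ‖x0‖ ^ 2 - ⟪u0, x0⟫) := by
    intro z
    rw [norm_sub_sq_real, inner_sub_right, inner_sub_left, real_inner_smul_left]
    linear_combination μ * real_inner_comm z x0
  have hsc : StrongConvexFn μ (liftG U x0 u0 μ g) := by
    intro x y a b ha hb hab
    simp only [hrw]
    have hwc : LinearMap.adjoint U ((a • x + b • y) - x0)
        = a • (LinearMap.adjoint U (x - x0)) + b • (LinearMap.adjoint U (y - x0)) := by
      have h1 : a • x + b • y - x0 = a • (x - x0) + b • (y - x0) := by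
        calc a • x + b • y - x0 = a • x + b • y - (a + b) • x0 := by rw [hab, one_smul]
          _ = a • (x - x0) + b • (y - x0) := by rw [add_smul, smul_sub, smul_sub]; abel
      rw [h1, map_add, map_smul, map_smul]
    have hcc : (⟪u0, (a • x + b • y) - x0⟫ + μ / 2 * ‖(a • x + b • y) - x0‖ ^ 2
          - μ / 2 * ‖a • x + b • y‖ ^ 2 : ℝ)
        = a * (⟪u0, x - x0⟫ + μ / 2 * ‖x - x0‖ ^ 2 - μ / 2 * ‖x‖ ^ 2)
          + b * (⟪u0, y - x0⟫ + μ / 2 * ‖y - x0‖ ^ 2 - μ / 2 * ‖y‖ ^ 2) := by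
      rw [hcform, hcform, hcform, inner_add_right, real_inner_smul_right,
        real_inner_smul_right]
      linear_combination (⟪u0, x0⟫ - μ / 2 * ‖x0‖ ^ 2) * hab
    rw [hwc, hcc]
    set wx := LinearMap.adjoint U (x - x0) with hwx
    set wy := LinearMap.adjoint U (y - x0) with hwy
    set cx := (⟪u0, x - x0⟫ + μ / 2 * ‖x - x0‖ ^ 2 - μ / 2 * ‖x‖ ^ 2 : ℝ) with hcx
    set cy := (⟪u0, y - x0⟫ + μ / 2 * ‖y - x0‖ ^ 2 - μ / 2 * ‖y‖ ^ 2 : ℝ) with hcy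
    rcases eq_or_lt_of_le ha with ha0 | ha0
    · have hb1 : b = 1 := by linarith
      subst hb1
      rw [← ha0]
      simp only [zero_smul, one_smul, zero_add, EReal.coe_zero, EReal.coe_one,
        zero_mul, one_mul, zero_add]
      exact le_refl _
    rcases eq_or_lt_of_le hb with hb0 | hb0
    · have ha1 : a = 1 := by linarith
      subst ha1
      rw [← hb0]
      simp only [zero_smul, one_smul, add_zero, EReal.coe_zero, EReal.coe_one,
        zero_mul, one_mul, add_zero]
      exact le_refl _
    have hHybot : g wy - (((μ / 2) * ‖wy‖ ^ 2 : ℝ) : EReal) + (cy : EReal) ≠ ⊥ :=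
      my_add_coe_ne_bot (my_sub_coe_ne_bot (hgpr.1 wy) _) _
    have hHxbot : g wx - (((μ / 2) * ‖wx‖ ^ 2 : ℝ) : EReal) + (cx : EReal) ≠ ⊥ :=
      my_add_coe_ne_bot (my_sub_coe_ne_bot (hgpr.1 wx) _) _
    rcases eq_or_ne (g wx) ⊤ with hgx | hgx
    · have h1 : g wx - (((μ / 2) * ‖wx‖ ^ 2 : ℝ) : EReal) + (cx : EReal) = ⊤ := by
        rw [hgx, sub_eq_add_neg, ← EReal.coe_neg, EReal.top_add_of_ne_bot (EReal.coe_ne_bot _),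
          EReal.top_add_of_ne_bot (EReal.coe_ne_bot _)]
      rw [h1, EReal.coe_mul_top_of_pos ha0,
        EReal.top_add_of_ne_bot (my_coe_mul_ne_bot hb0 hHybot)]
      exact le_top
    rcases eq_or_ne (g wy) ⊤ with hgy | hgy
    · have h1 : g wy - (((μ / 2) * ‖wy‖ ^ 2 : ℝ) : EReal) + (cy : EReal) = ⊤ := by
        rw [hgy, sub_eq_add_neg, ← EReal.coe_neg, EReal.top_add_of_ne_bot (EReal.coe_ne_bot _),
          EReal.top_add_of_ne_bot (EReal.coe_ne_bot _)]
      rw [h1, EReal.coe_mul_top_of_pos hb0,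
        EReal.add_top_of_ne_bot (my_coe_mul_ne_bot ha0 hHxbot)]
      exact le_top
    obtain ⟨α, hα⟩ : ∃ α : ℝ, g wx = α := ⟨(g wx).toReal, (EReal.coe_toReal hgx (hgpr.1 wx)).symm⟩
    obtain ⟨β, hβ⟩ : ∃ β : ℝ, g wy = β := ⟨(g wy).toReal, (EReal.coe_toReal hgy (hgpr.1 wy)).symm⟩
    have hconv := hgsc wx wy a b ha hb hab
    simp only [hα, hβ] at hconv ⊢
    rw [← EReal.coe_sub, ← EReal.coe_sub, ← EReal.coe_mul, ← EReal.coe_mul,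
      ← EReal.coe_add] at hconv
    calc g (a • wx + b • wy) - (((μ / 2) * ‖a • wx + b • wy‖ ^ 2 : ℝ) : EReal)
          + ((a * cx + b * cy : ℝ) : EReal)
        ≤ ((a * (α - μ / 2 * ‖wx‖ ^ 2) + b * (β - μ / 2 * ‖wy‖ ^ 2) : ℝ) : EReal)
          + ((a * cx + b * cy : ℝ) : EReal) := add_le_add_left hconv _
      _ = (a : EReal) * (((α : EReal) - (((μ / 2) * ‖wx‖ ^ 2 : ℝ) : EReal)) + (cx : EReal))
          + (b : EReal) * (((β : EReal) - (((μ / 2) * ‖wy‖ ^ 2 : ℝ) : EReal)) + (cy : EReal)) := by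
          norm_cast
          ring
  exact ⟨hsc, fun x y v hv => my_subdiff_strong hμ.le hbot hsc x y v hv⟩
end
end

section
/- Let U ∈ ℝ^{d'×d} have orthonormal columns with d' ≥ d, let x₀, u₀ ∈ ℝ^{d'} with Uᵀu₀ = 0, P = I − UUᵀ, μ > 0, and let g : ℝ^d → ℝ ∪ {∞} be closed, proper, μ-strongly convex; set g_U(x) = g(Uᵀ(x − x₀)) + ⟨u₀, x − x₀⟩ + (μ/2)‖P(x − x₀)‖². Then for every z ∈ ℝ^{d'} and γ > 0, writing z̃ = Uᵀ(z − x₀) and p_z = P(z − x₀): prox_{γ g_U}(z) = x₀ + U·prox_{γg}(z̃) + (1/(1+γμ))(p_z − γu₀); hence z − prox_{γg_U}(z) = U(z̃ − prox_{γg}(z̃)) + (γμ/(1+γμ)) p_z + (γ/(1+γμ)) u₀, and in particular Uᵀ(z − prox_{γg_U}(z)) = z̃ − prox_{γg}(z̃). -/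
noncomputable section

open scoped RealInnerProductSpace
open Finset

variable {E : Type*} [NormedAddCommGroup E] [InnerProductSpace ℝ E]

private lemma complete_square' {F : Type*} [NormedAddCommGroup F] [InnerProductSpace ℝ F]
    (c : ℝ) (b w v : F) (hv : c • v = -b) :
    c/2*‖w‖^2 + ⟪b,w⟫ = c/2*‖w - v‖^2 + (⟪b,v⟫ + c/2*‖v‖^2) := by
  have h2 : c*⟪w,v⟫ = -⟪b,w⟫ := by
    rw [← real_inner_smul_right, hv, inner_neg_right, real_inner_comm]
  have h3 : c*⟪v,v⟫ = -⟪b,v⟫ := by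
    rw [← real_inner_smul_right, hv, inner_neg_right, real_inner_comm]
  rw [norm_sub_sq_real, ← real_inner_self_eq_norm_sq v]
  linarith

private lemma part2_alg {V : Type*} [AddCommGroup V] [Module ℝ V] (γ μ : ℝ)
    (hγ : 0 < γ) (hμ : 0 < μ) (Z X Q' T u : V) :
    Z - (X + Q' + (1 / (1 + γ * μ)) • ((Z - X - T) - γ • u))
      = (T - Q') + (γ * μ / (1 + γ * μ)) • (Z - X - T) + (γ / (1 + γ * μ)) • u := by
  have h : (1:ℝ) + γ * μ ≠ 0 := by positivity
  match_scalars <;> field_simp <;> ring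

set_option maxHeartbeats 1000000 in
/-- prox of the lifted function `g_U`.  Writing
`z̃ = Uᵀ(z - x₀)` and `p_z = P(z - x₀) = (z - x₀) - U(Uᵀ(z - x₀))`, if `q` is the
prox of `g` at `z̃`, then the prox of `g_U` at `z` is exactly
`x₀ + U q + (1/(1+γμ))(p_z - γ u₀)`; moreover
`z - prox_{γ g_U}(z) = U(z̃ - q) + (γμ/(1+γμ)) p_z + (γ/(1+γμ)) u₀` and
`Uᵀ(z - prox_{γ g_U}(z)) = z̃ - q`. -/
theorem liftG_prox {d d' : ℕ} (hd : d ≤ d')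
    (U : EuclideanSpace ℝ (Fin d) →ₗ[ℝ] EuclideanSpace ℝ (Fin d'))
    (hU : ∀ x y : EuclideanSpace ℝ (Fin d), ⟪U x, U y⟫ = ⟪x, y⟫)
    (x0 u0 : EuclideanSpace ℝ (Fin d'))
    (hu0 : LinearMap.adjoint U u0 = 0)
    (μ : ℝ) (hμ : 0 < μ)
    (g : EuclideanSpace ℝ (Fin d) → EReal)
    (hgcl : ClosedFn g) (hgpr : ProperFn g) (hgsc : StrongConvexFn μ g)
    (γ : ℝ) (hγ : 0 < γ)
    (z : EuclideanSpace ℝ (Fin d'))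
    (q : EuclideanSpace ℝ (Fin d))
    (hq : IsProx γ g (LinearMap.adjoint U (z - x0)) q) :
    (∀ p, IsProx γ (liftG U x0 u0 μ g) z p ↔
      p = x0 + U q + (1 / (1 + γ * μ))
            • (((z - x0) - U (LinearMap.adjoint U (z - x0))) - γ • u0)) ∧
    z - (x0 + U q + (1 / (1 + γ * μ))
            • (((z - x0) - U (LinearMap.adjoint U (z - x0))) - γ • u0))
      = U (LinearMap.adjoint U (z - x0) - q)
        + (γ * μ / (1 + γ * μ)) • ((z - x0) - U (LinearMap.adjoint U (z - x0)))
        + (γ / (1 + γ * μ)) • u0 ∧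
    LinearMap.adjoint U
        (z - (x0 + U q + (1 / (1 + γ * μ))
            • (((z - x0) - U (LinearMap.adjoint U (z - x0))) - γ • u0)))
      = LinearMap.adjoint U (z - x0) - q := by
  have hc1 : (0:ℝ) < 1 + γ * μ := by positivity
  set A := LinearMap.adjoint U with hA
  have hAU : ∀ x, A (U x) = x := by
    intro x
    apply ext_inner_right ℝ
    intro v
    rw [hA, LinearMap.adjoint_inner_left]
    exact hU x v
  set zt := A (z - x0) with hzt
  set pz := (z - x0) - U zt with hpz
  set wstar := (1 / (1 + γ * μ)) • (pz - γ • u0) with hwstar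
  set pstar := x0 + U q + wstar with hpstar_def
  -- basic adjoint facts
  have hApz : A pz = 0 := by
    rw [hpz, map_sub, hAU, sub_self]
  have hAwstar : A wstar = 0 := by
    rw [hwstar, map_smul, map_sub, map_smul, hApz, hu0, smul_zero, sub_zero, smul_zero]
  have hUinner : ∀ (a : EuclideanSpace ℝ (Fin d)) (v : EuclideanSpace ℝ (Fin d')),
      A v = 0 → ⟪U a, v⟫ = 0 := by
    intro a v hv
    rw [← LinearMap.adjoint_inner_right, ← hA, hv, inner_zero_right]
  have hsplit : ∀ (a : EuclideanSpace ℝ (Fin d)) (v : EuclideanSpace ℝ (Fin d')),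
      A v = 0 → ‖U a + v‖^2 = ‖a‖^2 + ‖v‖^2 := by
    intro a v hv
    rw [norm_add_sq_real, hUinner a v hv]
    have : ‖U a‖^2 = ‖a‖^2 := by
      rw [← real_inner_self_eq_norm_sq, ← real_inner_self_eq_norm_sq, hU]
    rw [this]; ring
  -- the objective decomposition
  have hobj : ∀ x : EuclideanSpace ℝ (Fin d'),
      liftG U x0 u0 μ g x + ((1 / (2 * γ) * ‖x - z‖ ^ 2 : ℝ) : EReal)
      = g (A (x - x0)) +
        (((⟪u0, (x - x0) - U (A (x - x0))⟫
            + μ/2 * ‖(x - x0) - U (A (x - x0))‖^2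
            + 1/(2*γ) * ‖((x - x0) - U (A (x - x0))) - pz‖^2)
          + 1/(2*γ) * ‖A (x - x0) - zt‖^2 : ℝ) : EReal) := by
    intro x
    have hw0 : A ((x - x0) - U (A (x - x0))) = 0 := by
      rw [map_sub, hAU, sub_self]
    have hinner : ⟪u0, (x - x0) - U (A (x - x0))⟫ = ⟪u0, x - x0⟫ := by
      rw [inner_sub_right]
      have h0 : ⟪u0, U (A (x - x0))⟫ = 0 := by
        rw [← LinearMap.adjoint_inner_left, ← hA, hu0, inner_zero_left]
      rw [h0, sub_zero]
    have hxz : x - z = U (A (x - x0) - zt) + (((x - x0) - U (A (x - x0))) - pz) := by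
      rw [map_sub, hpz]; abel
    have hnorm : ‖x - z‖^2 = ‖A (x - x0) - zt‖^2 + ‖((x - x0) - U (A (x - x0))) - pz‖^2 := by
      rw [hxz]
      exact hsplit _ _ (by rw [map_sub, hw0, hApz, sub_self])
    simp only [liftG, ← hA]
    rw [add_assoc, ← EReal.coe_add]
    congr 1
    rw [EReal.coe_eq_coe_iff]
    rw [← hinner, hnorm]
    ring
  -- the quadratic gap
  have hvb : ((1 + γ * μ)/γ) • wstar = -(u0 - (1/γ) • pz) := by
    rw [hwstar, smul_smul]
    have h1 : (1 + γ * μ)/γ * (1 / (1 + γ * μ)) = 1/γ := by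
      field_simp
    rw [h1, smul_sub, smul_smul]
    have h2 : 1/γ * γ = 1 := by field_simp
    rw [h2, one_smul, neg_sub]
  have hb : ∀ w : EuclideanSpace ℝ (Fin d'),
      ⟪u0,w⟫ + μ/2*‖w‖^2 + 1/(2*γ)*‖w - pz‖^2
      = ((1 + γ * μ)/γ)/2*‖w‖^2 + ⟪u0 - (1/γ) • pz, w⟫ + 1/(2*γ)*‖pz‖^2 := by
    intro w
    have h1 : ‖w - pz‖^2 = ‖w‖^2 - 2*⟪w,pz⟫ + ‖pz‖^2 := norm_sub_sq_real w pz
    have h2 : ⟪u0 - (1/γ) • pz, w⟫ = ⟪u0,w⟫ - 1/γ*⟪pz,w⟫ := by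
      rw [inner_sub_left, real_inner_smul_left]
    have h3 : ⟪pz,w⟫ = ⟪w,pz⟫ := real_inner_comm _ _
    rw [h1, h2, h3]
    field_simp
    ring
  have hQ : ∀ w : EuclideanSpace ℝ (Fin d'),
      ⟪u0,w⟫ + μ/2*‖w‖^2 + 1/(2*γ)*‖w - pz‖^2
      = (⟪u0,wstar⟫ + μ/2*‖wstar‖^2 + 1/(2*γ)*‖wstar - pz‖^2)
        + (((1 + γ * μ)/γ)/2)*‖w - wstar‖^2 := by
    intro w
    have cs1 := complete_square' ((1 + γ * μ)/γ) (u0 - (1/γ) • pz) w wstar hvb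
    have hbw := hb w
    have hbw2 := hb wstar
    linarith
  -- g q is finite
  have hgqbot : g q ≠ ⊥ := hgpr.1 q
  have hgqtop : g q ≠ ⊤ := by
    obtain ⟨y0, hy0⟩ := hgpr.2
    intro h
    have h1 := hq y0
    rw [h, EReal.top_add_coe] at h1
    obtain ⟨r, hr⟩ : ∃ r : ℝ, g y0 = (r : EReal) :=
      ⟨(g y0).toReal, (EReal.coe_toReal hy0 (hgpr.1 y0)).symm⟩
    rw [hr, ← EReal.coe_add] at h1
    exact (EReal.coe_ne_top _) (top_le_iff.mp h1)
  obtain ⟨gq, hgq⟩ : ∃ r : ℝ, g q = (r : EReal) :=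
    ⟨(g q).toReal, (EReal.coe_toReal hgqtop hgqbot).symm⟩
  -- pstar components
  have hpq : A (pstar - x0) = q := by
    have h1 : pstar - x0 = U q + wstar := by rw [hpstar_def]; abel
    rw [h1, map_add, hAU, hAwstar, add_zero]
  have hpw : (pstar - x0) - U q = wstar := by
    rw [hpstar_def]; abel
  have hkpos : (0:ℝ) < ((1 + γ * μ)/γ)/2 := by positivity
  -- pstar is a prox point
  have hpstar : IsProx γ (liftG U x0 u0 μ g) z pstar := by
    intro x
    rw [hobj pstar, hobj x, hpq, hpw]
    have h1 := hq (A (x - x0))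
    have h2 : (⟪u0,wstar⟫ + μ/2*‖wstar‖^2 + 1/(2*γ)*‖wstar - pz‖^2)
        ≤ ⟪u0, (x - x0) - U (A (x - x0))⟫ + μ/2*‖(x - x0) - U (A (x - x0))‖^2
          + 1/(2*γ)*‖((x - x0) - U (A (x - x0))) - pz‖^2 := by
      rw [hQ ((x - x0) - U (A (x - x0)))]
      exact le_add_of_nonneg_right (by positivity)
    have key : ∀ (Xe : EReal) (r s : ℝ), Xe + ((r + s : ℝ) : EReal)
        = (Xe + (s : EReal)) + (r : EReal) := by
      intro Xe r s
      rw [EReal.coe_add]; abel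
    rw [key (g q), key (g (A (x - x0)))]
    exact add_le_add h1 (EReal.coe_le_coe_iff.2 h2)
  have hpart2 : z - pstar = U (zt - q) + (γ * μ / (1 + γ * μ)) • pz + (γ / (1 + γ * μ)) • u0 := by
    rw [map_sub, hpstar_def, hwstar, hpz]
    exact part2_alg γ μ hγ hμ z x0 (U q) (U zt) u0
  refine ⟨fun p => ⟨fun hp => ?_, fun h => h ▸ hpstar⟩, hpart2, ?_⟩
  · -- uniqueness
    have e1 := hp pstar
    have e2 := hpstar p
    rw [hobj p, hobj pstar, hpq, hpw] at e1 e2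
    set a := A (p - x0) with ha
    set w := p - x0 - U a with hw
    have hgabot : g a ≠ ⊥ := hgpr.1 a
    have hgatop : g a ≠ ⊤ := by
      intro h
      rw [h, hgq, EReal.top_add_coe, ← EReal.coe_add] at e1
      exact (EReal.coe_ne_top _) (top_le_iff.mp e1)
    obtain ⟨ga, hga⟩ : ∃ r : ℝ, g a = (r : EReal) :=
      ⟨(g a).toReal, (EReal.coe_toReal hgatop hgabot).symm⟩
    rw [hga, hgq, ← EReal.coe_add, ← EReal.coe_add, EReal.coe_le_coe_iff] at e1 e2
    have rq := hq a
    rw [hga, hgq, ← EReal.coe_add, ← EReal.coe_add, EReal.coe_le_coe_iff] at rq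
    have hQw := hQ w
    have hkX : (((1 + γ * μ)/γ)/2) * ‖w - wstar‖^2 ≤ 0 := by linarith
    have hXnn : (0:ℝ) ≤ ‖w - wstar‖^2 := by positivity
    have hX0 : ‖w - wstar‖^2 = 0 := by
      by_contra hne
      have hpos : 0 < ‖w - wstar‖^2 := lt_of_le_of_ne hXnn (Ne.symm hne)
      exact absurd hkX (not_le.2 (mul_pos hkpos hpos))
    have hwws : w = wstar :=
      sub_eq_zero.1 (norm_eq_zero.1 (pow_eq_zero_iff (by norm_num : (2:ℕ) ≠ 0) |>.1 hX0))
    rw [hwws] at e1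
    have heq : ga + 1/(2*γ)*‖a - zt‖^2 = gq + 1/(2*γ)*‖q - zt‖^2 :=
      le_antisymm (by linarith) (by linarith)
    -- midpoint argument
    set m := (1/2 : ℝ) • a + (1/2 : ℝ) • q with hm
    have hconv := hgsc a q (1/2) (1/2) (by norm_num) (by norm_num) (by norm_num)
    simp only [] at hconv
    rw [hga, hgq, ← EReal.coe_sub, ← EReal.coe_sub, ← EReal.coe_mul, ← EReal.coe_mul,
      ← EReal.coe_add] at hconv
    have hgm : g m ≤ ((1/2*(ga - μ / 2 * ‖a‖^2) + 1/2*(gq - μ / 2 * ‖q‖^2)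
        + μ / 2 * ‖m‖^2 : ℝ) : EReal) := by
      have h5 := (EReal.sub_le_iff_le_add (Or.inl (EReal.coe_ne_bot _))
        (Or.inl (EReal.coe_ne_top _))).1 hconv
      rw [← EReal.coe_add] at h5
      exact h5
    have hqm := hq m
    rw [hgq] at hqm
    have hfinal : gq + 1/(2*γ)*‖q - zt‖^2
        ≤ 1/2*(ga - μ / 2 * ‖a‖^2) + 1/2*(gq - μ / 2 * ‖q‖^2) + μ / 2 * ‖m‖^2
          + 1/(2*γ)*‖m - zt‖^2 := by
      rw [← EReal.coe_le_coe_iff]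
      calc ((gq + 1/(2*γ)*‖q - zt‖^2 : ℝ) : EReal)
          = (gq : EReal) + ((1/(2*γ)*‖q - zt‖^2 : ℝ) : EReal) := EReal.coe_add _ _
        _ ≤ g m + ((1/(2*γ)*‖m - zt‖^2 : ℝ) : EReal) := hqm
        _ ≤ ((1/2*(ga - μ / 2 * ‖a‖^2) + 1/2*(gq - μ / 2 * ‖q‖^2)
              + μ / 2 * ‖m‖^2 : ℝ) : EReal) + ((1/(2*γ)*‖m - zt‖^2 : ℝ) : EReal) :=
            add_le_add hgm le_rfl
        _ = _ := (EReal.coe_add _ _).symm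
    have hns : ∀ v : EuclideanSpace ℝ (Fin d), ‖(1/2:ℝ) • v‖^2 = 1/4*‖v‖^2 := by
      intro v
      rw [norm_smul, Real.norm_eq_abs, abs_of_pos (by norm_num : (0:ℝ) < 1/2)]
      ring
    have hma : m = (1/2:ℝ) • (a + q) := by rw [hm, smul_add]
    have e3 : ‖m‖^2 = 1/4*‖a + q‖^2 := by rw [hma, hns]
    have e4 : m - zt = (1/2:ℝ) • ((a - zt) + (q - zt)) := by rw [hm]; module
    have e5 : ‖m - zt‖^2 = 1/4*‖(a - zt) + (q - zt)‖^2 := by rw [e4, hns]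
    have e6 : ‖a + q‖^2 = ‖a‖^2 + 2*⟪a,q⟫ + ‖q‖^2 := norm_add_sq_real a q
    have e7 : μ * ‖a - q‖^2 = μ * (‖a‖^2 - 2*⟪a,q⟫ + ‖q‖^2) := by
      rw [norm_sub_sq_real]
    have e8 : ‖(a - zt) + (q - zt)‖^2 = ‖a - zt‖^2 + 2*⟪a - zt, q - zt⟫ + ‖q - zt‖^2 :=
      norm_add_sq_real _ _
    have e9 : (1/(2*γ)) * ‖a - q‖^2
        = (1/(2*γ)) * (‖a - zt‖^2 - 2*⟪a - zt, q - zt⟫ + ‖q - zt‖^2) := by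
      have e10 : a - q = (a - zt) - (q - zt) := by abel
      rw [e10, norm_sub_sq_real]
    rw [e3, e5, e6, e8] at hfinal
    have hiaq : (μ/2 + 1/(2*γ)) * ‖a - q‖^2 ≤ 0 := by
      have expand : (μ/2 + 1/(2*γ)) * ‖a - q‖^2
          = 1/2 * (μ * ‖a - q‖^2) + (1/(2*γ)) * ‖a - q‖^2 := by ring
      rw [expand, e7, e9]
      linarith
    have hc2 : (0:ℝ) < μ/2 + 1/(2*γ) := by positivity
    have hXq : ‖a - q‖^2 = 0 := by
      by_contra hne
      have hpos : 0 < ‖a - q‖^2 := lt_of_le_of_ne (by positivity) (Ne.symm hne)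
      exact absurd hiaq (not_le.2 (mul_pos hc2 hpos))
    have haq : a = q :=
      sub_eq_zero.1 (norm_eq_zero.1 (pow_eq_zero_iff (by norm_num : (2:ℕ) ≠ 0) |>.1 hXq))
    have hpdef : p = x0 + U a + w := by rw [hw]; abel
    rw [hpdef, haq, hwws, hpstar_def]
  · rw [hpart2]
    rw [map_add, map_add, map_smul, map_smul, hAU, hApz, hu0, smul_zero, smul_zero,
      add_zero, add_zero]
end
end
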